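/- arXiv:2310.15207 — 7 statements merged into one kernel-verified Lean document; each statement's English description precedes it below -/
import Mathlib

section
/- Let n be a positive odd integer, and let r and s be nonnegative integers with s ≤ n-1. Then the q-Pochhammer symbol satisfies (-q;q)_{rn+s} ≡ 2^r · (-q;q)_s modulo the n-th cyclotomic polynomial Φ_n(q), as a congruence of polynomials in Z[q]. -/
/-! At a primitive `n`-th root of unity `ζ`, the factors `1 + ζ^(i+1)` repeat with period `n`, and
one full period multiplies to `2`: evaluating `X^n - 1 = ∏ (X - ζ^i)` at `-1` gives
`∏ (1 + ζ^i) = 2` for odd `n`. Hence the two sides agree at `ζ`, so their difference is divisible by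
the minimal polynomial `Φ_n` of `ζ` over `ℤ`. -/

open Finset Polynomial

theorem IsPrimitiveRoot.prod_range_one_add_pow_add {R : Type*} [CommRing R] [IsDomain R]
    {ζ : R} {n : ℕ} (hζ : IsPrimitiveRoot ζ n) (hodd : Odd n) (c : ℕ) :
    ∏ i ∈ range n, (1 + ζ ^ (i + c)) = 2 := by
  have hpow : (ζ ^ c) ^ n = 1 := by rw [← pow_mul, mul_comm, pow_mul, hζ.pow_eq_one, one_pow]
  have hfactor := congrArg (eval (-1)) (X_pow_sub_C_eq_prod hζ hodd.pos hpow)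
  simp only [eval_sub, eval_pow, eval_X, eval_C, eval_prod, hodd.neg_one_pow] at hfactor
  have hneg : ∏ i ∈ range n, (-1 - ζ ^ i * ζ ^ c) = -∏ i ∈ range n, (1 + ζ ^ (i + c)) := by
    calc ∏ i ∈ range n, (-1 - ζ ^ i * ζ ^ c) = ∏ i ∈ range n, (-1) * (1 + ζ ^ (i + c)) :=
          prod_congr rfl fun i _ => by ring
      _ = -∏ i ∈ range n, (1 + ζ ^ (i + c)) := by
          rw [prod_mul_distrib, prod_const, card_range, hodd.neg_one_pow, neg_one_mul]
  rw [hneg] at hfactor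
  linear_combination hfactor

theorem IsPrimitiveRoot.prod_range_mul_add_one_add_pow_succ {R : Type*} [CommRing R]
    [IsDomain R] {ζ : R} {n : ℕ} (hζ : IsPrimitiveRoot ζ n) (hodd : Odd n) (r s : ℕ) :
    ∏ i ∈ range (r * n + s), (1 + ζ ^ (i + 1)) = 2 ^ r * ∏ i ∈ range s, (1 + ζ ^ (i + 1)) := by
  induction r with
  | zero => simp
  | succ r ih =>
    have hblock : ∏ j ∈ range n, (1 + ζ ^ (r * n + s + j + 1)) = 2 := by
      rw [← hζ.prod_range_one_add_pow_add hodd (r * n + s + 1)]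
      exact prod_congr rfl fun j _ => by ring_nf
    rw [show (r + 1) * n + s = r * n + s + n by ring, prod_range_add, ih, hblock]
    ring

theorem Polynomial.cyclotomic_dvd_sub_of_aeval_eq {K : Type*} [Field K] [CharZero K] {μ : K}
    {n : ℕ} (hμ : IsPrimitiveRoot μ n) (hn : 0 < n) {p q : ℤ[X]} (h : aeval μ p = aeval μ q) :
    cyclotomic n ℤ ∣ p - q := by
  rw [cyclotomic_eq_minpoly hμ hn]
  exact minpoly.isIntegrallyClosed_dvd (hμ.isIntegral hn) (by rw [map_sub, h, sub_self])

theorem stmt0_general (n : ℕ) (hodd : Odd n) (r s : ℕ) :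
    (Polynomial.cyclotomic n ℤ) ∣
      (∏ i ∈ Finset.range (r * n + s), (1 + (Polynomial.X : Polynomial ℤ) ^ (i + 1))) -
        2 ^ r * ∏ i ∈ Finset.range s, (1 + (Polynomial.X : Polynomial ℤ) ^ (i + 1)) := by
  have hζ := Complex.isPrimitiveRoot_exp n hodd.pos.ne'
  apply cyclotomic_dvd_sub_of_aeval_eq hζ hodd.pos
  simpa only [map_mul, map_pow, map_prod, map_add, map_one, aeval_X, map_ofNat]
    using hζ.prod_range_mul_add_one_add_pow_succ hodd r s

/-- For `n` a positive odd integer and `r, s` with `s ≤ n-1`,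
`(-q;q)_{rn+s} ≡ 2^r (-q;q)_s (mod Φ_n(q))` in `ℤ[q]`. -/
theorem stmt0 (n : ℕ) (hn : 0 < n) (hodd : Odd n) (r s : ℕ) (hs : s ≤ n - 1) :
    (Polynomial.cyclotomic n ℤ) ∣
      (∏ i ∈ Finset.range (r * n + s), (1 + (Polynomial.X : Polynomial ℤ) ^ (i + 1))) -
        2 ^ r * ∏ i ∈ Finset.range s, (1 + (Polynomial.X : Polynomial ℤ) ^ (i + 1)) :=
  stmt0_general n hodd r s
end

section
/- (q-Lucas theorem) Let n be a positive integer, and let a, b, r, s be nonnegative integers with b ≤ n-1 and s ≤ n-1. Then the Gaussian binomial coefficient satisfies C(an+b, rn+s)_q ≡ C(a,r) · C(b,s)_q modulo Φ_n(q), where C(a,r) is the ordinary binomial coefficient. -/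
/-!
Put `(q;q)_M = ∏_{j<M} (1 - q^{j+1})`, so that `C(M,N)_q (q;q)_N (q;q)_{M-N} = (q;q)_M`.
At a primitive `n`-th root of unity `ζ` the vanishing factors of `(q;q)_M` are exactly the
`1 - q^{kn}` with `1 ≤ k ≤ M / n`, and `(1 - q^{kn}) / (1 - q^n)` takes the value `k` at `ζ`. Hence
`(q;q)_{un+v} = (1 - q^n)^u W` with `W(ζ) = u! (ζ;ζ)_{n-1}^u (ζ;ζ)_v`, nonzero for `v < n`.
In the factorial identity for `M = an+b`, `N = rn+s` the powers of `1 - q^n` cancel when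
`s ≤ b`, and the values at `ζ` then give `C(a,r) C(b,s)_ζ`; when `s > b` a carry leaves one
factor `1 - q^n` over, so `C(M,N)_ζ = 0 = C(b,s)_ζ`. As `Φ_n` is the minimal polynomial of `ζ`
over `ℚ`, the congruence follows.
-/

open Finset Polynomial

/-- The q-shifted factorial `(a;Q)_k` in `ℚ(q)`. -/
noncomputable def poch (a Q : RatFunc ℚ) (k : ℕ) : RatFunc ℚ :=
  ∏ i ∈ Finset.range k, (1 - a * Q ^ i)

/-- The Gaussian binomial coefficient `C(M,N)_q` in `ℚ(q)`. -/
noncomputable def qbinom (M N : ℕ) : RatFunc ℚ :=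
  if N ≤ M then
    poch RatFunc.X RatFunc.X M / (poch RatFunc.X RatFunc.X N * poch RatFunc.X RatFunc.X (M - N))
  else 0

open scoped Nat

section QAnalogues

variable (R : Type*) [CommRing R]

noncomputable def qFactorial (M : ℕ) : R[X] := ∏ j ∈ range M, (1 - X ^ (j + 1))

noncomputable def qChoose : ℕ → ℕ → R[X]
  | _, 0 => 1
  | 0, _ + 1 => 0
  | M + 1, N + 1 => qChoose M N + X ^ (N + 1) * qChoose M (N + 1)

variable {R}

@[simp] lemma qFactorial_zero : qFactorial R 0 = 1 := prod_range_zero _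

lemma qFactorial_succ (M : ℕ) : qFactorial R (M + 1) = qFactorial R M * (1 - X ^ (M + 1)) :=
  prod_range_succ _ _

lemma qFactorial_add (M k : ℕ) :
    qFactorial R (M + k) = qFactorial R M * ∏ j ∈ range k, (1 - X ^ (M + j + 1)) := by
  simp only [qFactorial, prod_range_add, add_assoc]

@[simp] lemma eval_zero_qFactorial (M : ℕ) : (qFactorial R M).eval 0 = 1 := by
  simp [qFactorial, eval_prod]

lemma qFactorial_ne_zero [Nontrivial R] (M : ℕ) : qFactorial R M ≠ 0 := fun h => by
  simpa [h] using eval_zero_qFactorial (R := R) M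

@[simp] lemma qChoose_zero_right (M : ℕ) : qChoose R M 0 = 1 := by cases M <;> rfl

lemma qChoose_succ_succ (M N : ℕ) :
    qChoose R (M + 1) (N + 1) = qChoose R M N + X ^ (N + 1) * qChoose R M (N + 1) := rfl

lemma qChoose_eq_zero_of_lt {M N : ℕ} (h : M < N) : qChoose R M N = 0 := by
  induction M generalizing N with
  | zero => obtain ⟨N, rfl⟩ := Nat.exists_eq_succ_of_ne_zero h.ne'; rfl
  | succ M ih =>
    obtain ⟨N, rfl⟩ := Nat.exists_eq_succ_of_ne_zero (by omega : N ≠ 0)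
    rw [qChoose_succ_succ, ih (by omega), ih (by omega), mul_zero, add_zero]

theorem qChoose_add_mul_qFactorial_mul_qFactorial (N K : ℕ) :
    qChoose R (N + K) N * qFactorial R N * qFactorial R K = qFactorial R (N + K) := by
  induction N generalizing K with
  | zero => simp
  | succ N ih =>
    induction K with
    | zero =>
      rw [add_zero, qChoose_succ_succ, qChoose_eq_zero_of_lt N.lt_succ_self, qFactorial_succ]
      linear_combination (1 - X ^ (N + 1)) * ih 0
    | succ K ihK =>
      rw [show N + 1 + (K + 1) = N + (K + 1) + 1 by omega, qChoose_succ_succ,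
        qFactorial_succ N, qFactorial_succ K, qFactorial_succ (N + (K + 1))]
      have h := ih (K + 1)
      rw [qFactorial_succ K] at h
      rw [show N + 1 + K = N + (K + 1) by omega, qFactorial_succ N] at ihK
      linear_combination (1 - X ^ (N + 1)) * h + X ^ (N + 1) * (1 - X ^ (K + 1)) * ihK

end QAnalogues

section RootOfUnity

variable {R A : Type*} [CommRing R] [CommRing A] [Algebra R A] {n : ℕ} {ζ : A}

lemma aeval_prod_one_sub_X_pow_add_of_pow_eq_one {M : ℕ} (hM : ζ ^ M = 1) (k : ℕ) :
    aeval ζ (∏ j ∈ range k, (1 - X ^ (M + j + 1)) : R[X]) = aeval ζ (qFactorial R k) := by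
  simp [qFactorial, map_prod, add_assoc, pow_add, hM]

lemma aeval_qFactorial_ne_zero [IsDomain A] (hζ : IsPrimitiveRoot ζ n) {v : ℕ} (hv : v < n) :
    aeval ζ (qFactorial R v) ≠ 0 := by
  simp only [qFactorial, map_prod, map_sub, map_one, map_pow, aeval_X]
  exact prod_ne_zero_iff.mpr fun j hj =>
    sub_ne_zero.mpr (hζ.pow_ne_one_of_pos_of_lt j.succ_ne_zero (by simp at hj; omega)).symm

lemma exists_qFactorial_mul_eq (hn : 0 < n) (hζ : ζ ^ n = 1) (u : ℕ) :
    ∃ w : R[X], qFactorial R (u * n) = (1 - X ^ n) ^ u * w ∧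
      aeval ζ w = (u ! : A) * aeval ζ (qFactorial R (n - 1)) ^ u := by
  induction u with
  | zero => exact ⟨1, by simp⟩
  | succ u ih =>
    obtain ⟨w, hw, hw_eval⟩ := ih
    set block : R[X] := ∏ j ∈ range (n - 1), (1 - X ^ (u * n + j + 1))
    set geom : R[X] := ∑ i ∈ range (u + 1), (X ^ n) ^ i
    refine ⟨w * block * geom, ?_, ?_⟩
    · have hlast : (1 - X ^ (u * n + (n - 1) + 1) : R[X]) = (1 - X ^ n) * geom := by
        rw [mul_neg_geom_sum, ← pow_mul, show u * n + (n - 1) + 1 = n * (u + 1) by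
          rw [Nat.mul_succ, mul_comm n u]; omega]
      rw [show (u + 1) * n = u * n + (n - 1) + 1 by rw [Nat.succ_mul]; omega, qFactorial_succ,
        qFactorial_add, hlast, hw]
      ring
    · have hgeom : aeval ζ geom = (u + 1 : A) := by
        simp [geom, map_sum, hζ]
      rw [map_mul, map_mul, hw_eval, hgeom,
        aeval_prod_one_sub_X_pow_add_of_pow_eq_one (by rw [mul_comm, pow_mul, hζ, one_pow])]
      push_cast [Nat.factorial_succ]
      ring

lemma exists_qFactorial_mul_add_eq (hn : 0 < n) (hζ : ζ ^ n = 1) (u v : ℕ) :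
    ∃ w : R[X], qFactorial R (u * n + v) = (1 - X ^ n) ^ u * w ∧
      aeval ζ w = (u ! : A) * aeval ζ (qFactorial R (n - 1)) ^ u * aeval ζ (qFactorial R v) := by
  obtain ⟨w, hw, hw_eval⟩ := exists_qFactorial_mul_eq (R := R) hn hζ u
  refine ⟨w * ∏ j ∈ range v, (1 - X ^ (u * n + j + 1)),
    by rw [qFactorial_add, hw, mul_assoc], ?_⟩
  rw [map_mul, hw_eval,
    aeval_prod_one_sub_X_pow_add_of_pow_eq_one (by rw [mul_comm, pow_mul, hζ, one_pow])]

end RootOfUnity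

section Lucas

variable {R A : Type*} [CommRing R] [CommRing A] [Algebra R A] {n : ℕ} {ζ : A}

lemma exists_aeval_qChoose_mul (hn : 0 < n) (hζ : ζ ^ n = 1) (r s u v : ℕ) :
    ∃ w : R[X], qFactorial R (r * n + s + (u * n + v)) = (1 - X ^ n) ^ (r + u) * w ∧
      aeval ζ (qChoose R (r * n + s + (u * n + v)) (r * n + s)) *
        ((r ! * u ! : A) * aeval ζ (qFactorial R (n - 1)) ^ (r + u) *
          aeval ζ (qFactorial R s) * aeval ζ (qFactorial R v)) = aeval ζ w := by
  obtain ⟨w₁, hw₁, hw₁_eval⟩ := exists_qFactorial_mul_add_eq (R := R) hn hζ r s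
  obtain ⟨w₂, hw₂, hw₂_eval⟩ := exists_qFactorial_mul_add_eq (R := R) hn hζ u v
  refine ⟨qChoose R (r * n + s + (u * n + v)) (r * n + s) * w₁ * w₂, ?_, ?_⟩
  · rw [← qChoose_add_mul_qFactorial_mul_qFactorial, hw₁, hw₂]
    ring
  · rw [map_mul, map_mul, hw₁_eval, hw₂_eval]
    ring

lemma one_sub_X_pow_ne_zero [Nontrivial R] (hn : 0 < n) : (1 - X ^ n : R[X]) ≠ 0 := fun h => by
  simpa [zero_pow hn.ne'] using congrArg (eval (0 : R)) h

lemma factorial_mul_factorial_mul_aeval_ne_zero [IsDomain A] [CharZero A]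
    (hζ : IsPrimitiveRoot ζ n) {s v : ℕ} (hs : s < n) (hv : v < n) (r u : ℕ) :
    (r ! * u ! : A) * aeval ζ (qFactorial R (n - 1)) ^ (r + u) *
      aeval ζ (qFactorial R s) * aeval ζ (qFactorial R v) ≠ 0 := by
  have hE {k : ℕ} (hk : k < n) := aeval_qFactorial_ne_zero (R := R) hζ hk
  have hfac (k : ℕ) : (k ! : A) ≠ 0 := Nat.cast_ne_zero.mpr k.factorial_ne_zero
  exact mul_ne_zero (mul_ne_zero (mul_ne_zero (mul_ne_zero (hfac r) (hfac u))
    (pow_ne_zero _ (hE (by omega)))) (hE hs)) (hE hv)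

lemma aeval_qChoose_of_add_lt [IsDomain R] [IsDomain A] [CharZero A]
    (hζ : IsPrimitiveRoot ζ n) {s v : ℕ} (hsv : s + v < n) (r u : ℕ) :
    aeval ζ (qChoose R ((r + u) * n + (s + v)) (r * n + s)) =
      ((r + u).choose r : A) * aeval ζ (qChoose R (s + v) s) := by
  have hn : 0 < n := by omega
  have hidx : (r + u) * n + (s + v) = r * n + s + (u * n + v) := by ring
  obtain ⟨w, hw, hc⟩ := exists_aeval_qChoose_mul (R := R) hn hζ.pow_eq_one r s u v
  obtain ⟨w', hw', hw'_eval⟩ :=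
    exists_qFactorial_mul_add_eq (R := R) hn hζ.pow_eq_one (r + u) (s + v)
  obtain rfl : w = w' :=
    mul_left_cancel₀ (pow_ne_zero _ (one_sub_X_pow_ne_zero hn)) (hw.symm.trans (hidx ▸ hw'))
  have hsmall := congrArg (aeval ζ) (qChoose_add_mul_qFactorial_mul_qFactorial (R := R) s v)
  simp only [map_mul] at hsmall
  have hchoose : ((r + u).choose r * u ! * r ! : A) = (r + u)! := by
    rw [add_comm r u]
    exact_mod_cast Nat.add_choose_mul_factorial_mul_factorial u r
  rw [hidx]
  refine mul_right_cancel₀ (factorial_mul_factorial_mul_aeval_ne_zero (R := R) hζ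
    (by omega : s < n) (by omega : v < n) r u) ?_
  linear_combination hc + hw'_eval
    - ((r + u).choose r * r ! * u ! * aeval ζ (qFactorial R (n - 1)) ^ (r + u) : A) * hsmall
    - (aeval ζ (qFactorial R (n - 1)) ^ (r + u) * aeval ζ (qFactorial R (s + v))) * hchoose

lemma aeval_qChoose_eq_zero_of_le_add [IsDomain R] [IsDomain A] [CharZero A]
    (hζ : IsPrimitiveRoot ζ n) {s v t : ℕ} (hs : s < n) (hv : v < n) (hsv : s + v = n + t)
    (r u : ℕ) : aeval ζ (qChoose R (r * n + s + (u * n + v)) (r * n + s)) = 0 := by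
  have hn : 0 < n := by omega
  have hidx : (r + u + 1) * n + t = r * n + s + (u * n + v) := by
    rw [add_mul, add_mul, one_mul]; omega
  obtain ⟨w, hw, hc⟩ := exists_aeval_qChoose_mul (R := R) hn hζ.pow_eq_one r s u v
  obtain ⟨w', hw', -⟩ :=
    exists_qFactorial_mul_add_eq (R := R) (A := A) hn hζ.pow_eq_one (r + u + 1) t
  have hww' : w = (1 - X ^ n) * w' := by
    refine mul_left_cancel₀ (pow_ne_zero (r + u) (one_sub_X_pow_ne_zero hn)) ?_
    rw [← hw, ← hidx, hw', pow_succ, mul_assoc]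
  rw [hww', map_mul, map_sub, map_one, map_pow, aeval_X, hζ.pow_eq_one, sub_self, zero_mul] at hc
  exact (mul_eq_zero.mp hc).resolve_right
    (factorial_mul_factorial_mul_aeval_ne_zero (R := R) hζ hs hv r u)

theorem aeval_qChoose_mul_add [IsDomain R] [IsDomain A] [CharZero A]
    (hζ : IsPrimitiveRoot ζ n) {b s : ℕ} (hb : b < n) (hs : s < n) (a r : ℕ) :
    aeval ζ (qChoose R (a * n + b) (r * n + s)) = (a.choose r : A) * aeval ζ (qChoose R b s) := by
  rcases lt_or_ge a r with har | hra
  · have hlt : a * n + b < r * n + s :=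
      calc a * n + b < (a + 1) * n := by rw [add_mul, one_mul]; omega
        _ ≤ r * n + s := le_add_right (Nat.mul_le_mul_right n har)
    rw [qChoose_eq_zero_of_lt hlt, Nat.choose_eq_zero_of_lt har, map_zero, Nat.cast_zero, zero_mul]
  obtain ⟨u, rfl⟩ := Nat.exists_eq_add_of_le hra
  rcases le_or_gt s b with hsb | hbs
  · obtain ⟨v, rfl⟩ := Nat.exists_eq_add_of_le hsb
    exact aeval_qChoose_of_add_lt hζ hb r u
  rw [qChoose_eq_zero_of_lt hbs, map_zero, mul_zero]
  rcases u with _ | u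
  · rw [add_zero, qChoose_eq_zero_of_lt (by omega), map_zero]
  rw [show (r + (u + 1)) * n + b = r * n + s + (u * n + (n + b - s)) by
    rw [add_mul, add_mul, one_mul]; omega]
  exact aeval_qChoose_eq_zero_of_le_add hζ hs (by omega) (by omega : s + (n + b - s) = n + b) r u

end Lucas

lemma poch_X_X_eq_algebraMap (k : ℕ) :
    poch RatFunc.X RatFunc.X k = algebraMap ℚ[X] (RatFunc ℚ) (qFactorial ℚ k) := by
  simp only [poch, qFactorial, map_prod, map_sub, map_one, map_pow, RatFunc.algebraMap_X]
  exact prod_congr rfl fun i _ => by ring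

lemma qbinom_eq_algebraMap_qChoose (M N : ℕ) :
    qbinom M N = algebraMap ℚ[X] (RatFunc ℚ) (qChoose ℚ M N) := by
  rcases lt_or_ge M N with h | h
  · rw [qbinom, if_neg (by omega), qChoose_eq_zero_of_lt h, map_zero]
  obtain ⟨K, rfl⟩ := Nat.exists_eq_add_of_le h
  have hden : algebraMap ℚ[X] (RatFunc ℚ) (qFactorial ℚ N * qFactorial ℚ K) ≠ 0 :=
    RatFunc.algebraMap_ne_zero (mul_ne_zero (qFactorial_ne_zero N) (qFactorial_ne_zero K))
  rw [qbinom, if_pos h, Nat.add_sub_cancel_left, poch_X_X_eq_algebraMap, poch_X_X_eq_algebraMap,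
    poch_X_X_eq_algebraMap, ← map_mul, div_eq_iff hden, ← map_mul, ← mul_assoc,
    qChoose_add_mul_qFactorial_mul_qFactorial]

/-- q-Lucas theorem: for `b, s ≤ n-1`,
`C(an+b, rn+s)_q ≡ C(a,r)·C(b,s)_q (mod Φ_n(q))`. -/
theorem stmt3 (n : ℕ) (hn : 0 < n) (a b r s : ℕ) (hb : b ≤ n - 1) (hs : s ≤ n - 1) :
    (Polynomial.cyclotomic n ℚ) ∣
      (qbinom (a * n + b) (r * n + s) - (a.choose r : RatFunc ℚ) * qbinom b s).num := by
  have hζ := Complex.isPrimitiveRoot_exp n hn.ne'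
  rw [qbinom_eq_algebraMap_qChoose, qbinom_eq_algebraMap_qChoose,
    ← map_natCast (algebraMap ℚ[X] (RatFunc ℚ)), ← map_mul, ← map_sub, RatFunc.num_algebraMap,
    cyclotomic_eq_minpoly_rat hζ hn]
  apply minpoly.dvd
  rw [map_sub, map_mul, map_natCast, aeval_qChoose_mul_add hζ (by omega) (by omega), sub_self]
end

section
/- Let p ≡ 1 (mod 4) be a prime and r a positive integer. Then p · (3/4)_{(p^r-1)/2} · (5/4)_{(p^{r-1}-1)/2} / ((5/4)_{(p^r-1)/2} · (3/4)_{(p^{r-1}-1)/2}) ≡ -Γ_p(1/4)^4 (mod p^{2r}), as a congruence of p-adic integers. -/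
open Finset

/-- The rising factorial `(a)_k = a(a+1)⋯(a+k-1)` in `ℚ_p`. -/
noncomputable def asc {p : ℕ} [Fact p.Prime] (a : ℚ_[p]) (k : ℕ) : ℚ_[p] :=
  ∏ i ∈ Finset.range k, (a + i)

/-!
Write `q = 1/4` and `h = p^r/2`. Iterating `Γ_p(x+1) = -x Γ_p(x)` (for a unit `x`, and
`-Γ_p(x)` otherwise) expresses `(x)_M Γ_p(x)` through `Γ_p(x+M)` and the non-unit factors of
`(x)_M`. For `x = 3/4, 5/4` and `M = (p^r-1)/2` these are `p(3/4+j)`, resp. `p(1/4+j)`, which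
rebuild the Pochhammer symbols of length `(p^(r-1)-1)/2`; the quotient becomes
`-Γ_p(q)Γ_p(q+h) / (Γ_p(1-q)Γ_p(1-q+h))`.

The reflection product `Γ_p(x)Γ_p(1-x)` squares to `1` and is invariant under `x ↦ x + pu`
(among `p` consecutive integers an even number, `p-1`, are prime to `p`), which turns the
quotient into `-Γ_p(q)^2 Γ_p(q+h)Γ_p(q-h)`. Finally
`Γ_p(q+h)Γ_p(q-h) ≡ Γ_p(q)^2 (mod p^(2r))`: by density of `ℕ` in `ℤ_p` this reduces to
`∏(k+a) ≡ ∏ k (mod p^(2r))` over the `k` prime to `p` in an interval of length `a ≡ 0 (mod p^r)`.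
Pairing `k` with `k' ≡ -k (mod a)` proves it for the squares of both sides; as `p` is odd, the two
sides, congruent mod `p`, have a sum prime to `p`, so the congruence passes from squares to sides.
-/

theorem Function.Periodic.prod_range_add {M : Type*} [CommMonoid M] {f : ℕ → M} {c : ℕ}
    (hf : Function.Periodic f c) (n : ℕ) :
    ∏ k ∈ range c, f (n + k) = ∏ k ∈ range c, f k := by
  induction n with
  | zero => simp
  | succ n ih =>
    rcases c with _ | c
    · simp
    rw [← ih, prod_range_succ, prod_range_succ', add_zero, ← hf n]
    simp only [add_assoc, Nat.add_comm 1]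

theorem exists_involution_range_dvd_add (a c : ℕ) :
    ∃ σ : ℕ → ℕ, ∀ i ∈ range a,
      σ i ∈ range a ∧ σ (σ i) = i ∧ a ∣ c + i + σ i := by
  rcases Nat.eq_zero_or_pos a with rfl | ha
  · exact ⟨id, by simp⟩
  have : NeZero a := ⟨ha.ne'⟩
  refine ⟨fun i => (-((c + i : ℕ) : ZMod a)).val,
    fun i hi => ⟨mem_range.mpr (ZMod.val_lt _), ?_, ?_⟩⟩
  · have : ((c + (-((c + i : ℕ) : ZMod a)).val : ℕ) : ZMod a) = -i := by
      push_cast [ZMod.natCast_val, ZMod.cast_id]; ring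
    simp only [this, neg_neg, ZMod.val_natCast_of_lt (mem_range.mp hi)]
  · rw [← ZMod.natCast_eq_zero_iff]
    push_cast [ZMod.natCast_val, ZMod.cast_id]
    ring

theorem filter_range_mod_eq_image {p s K M : ℕ} (hs : s < p) (hM : M ≤ s + p * K)
    (hM' : s + p * K < M + p) :
    (range M).filter (fun i => i % p = s) = (range K).image (fun j => s + p * j) := by
  ext i
  simp only [mem_filter, mem_range, mem_image]
  constructor
  · rintro ⟨hi, rfl⟩
    refine ⟨i / p, ?_, Nat.mod_add_div i p⟩
    have := Nat.mod_add_div i p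
    exact Nat.lt_of_mul_lt_mul_left (a := p) (by omega)
  · rintro ⟨j, hj, rfl⟩
    have := Nat.mul_le_mul_left p (Nat.succ_le_of_lt hj)
    refine ⟨by rw [Nat.mul_succ] at this; omega, ?_⟩
    rw [Nat.add_mul_mod_self_left, Nat.mod_eq_of_lt hs]

theorem prod_range_ite_dvd_add {R : Type*} [CommRing R] {p : ℕ} (hp : p.Prime) (hp2 : p ≠ 2)
    (n : ℕ) : ∏ i ∈ range p, (if p ∣ n + i then (1 : R) else -1) = 1 := by
  have hper : Function.Periodic (fun k => if p ∣ k then (1 : R) else -1) p := fun k => by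
    simp [Nat.dvd_add_self_right]
  rw [hper.prod_range_add n, range_eq_Ico, prod_eq_prod_Ico_succ_bot hp.pos, if_pos (dvd_zero p),
    one_mul, prod_congr rfl fun k hk => if_neg (Nat.not_dvd_of_pos_of_lt (mem_Ico.mp hk).1
      (mem_Ico.mp hk).2), prod_const, Nat.card_Ico, (hp.even_sub_one hp2).neg_one_pow]

theorem prod_filter_range_add_modEq {p r a : ℕ} (hp : p.Prime) (hp2 : p ≠ 2) (hr : 0 < r)
    (ha : p ^ r ∣ a) (b : ℕ) :
    ∏ i ∈ (range a).filter (fun i => ¬ p ∣ b + i), ((b : ℤ) + a + i) ≡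
      ∏ i ∈ (range a).filter (fun i => ¬ p ∣ b + i), ((b : ℤ) + i) [ZMOD p ^ (2 * r)] := by
  set S := (range a).filter (fun i => ¬ p ∣ b + i)
  have hpZ : Prime (p : ℤ) := Nat.prime_iff_prime_int.mp hp
  have hpa : p ∣ a := (dvd_pow_self p hr.ne').trans ha
  obtain ⟨σ, hσ⟩ := exists_involution_range_dvd_add a (2 * b)
  have hσS : ∀ i ∈ S, σ i ∈ S := by
    intro i hi
    rw [mem_filter] at hi ⊢
    obtain ⟨hσi, -, hdvd⟩ := hσ i hi.1
    refine ⟨hσi, fun hpσ => hi.2 ?_⟩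
    have : p ∣ (b + i) + (b + σ i) := by
      have := hpa.trans hdvd
      rwa [show 2 * b + i + σ i = (b + i) + (b + σ i) by ring] at this
    exact (Nat.dvd_add_left hpσ).mp this
  have hσσ : ∀ i ∈ S, σ (σ i) = i := fun i hi => (hσ i (mem_filter.mp hi).1).2.1
  have hreindex : ∀ f : ℕ → ℤ, ∏ i ∈ S, f (σ i) = ∏ i ∈ S, f i := fun f =>
    prod_nbij' σ σ hσS hσS hσσ hσσ fun _ _ => rfl
  set X := ∏ i ∈ S, ((b : ℤ) + a + i)
  set Y := ∏ i ∈ S, ((b : ℤ) + i)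
  -- `(b + i) + (b + σ i) ≡ 0 (mod a)`, so the terms of first order in `a` cancel
  have hsq : X * X ≡ Y * Y [ZMOD p ^ (2 * r)] := by
    calc X * X = ∏ i ∈ S, (((b : ℤ) + a + i) * ((b : ℤ) + a + σ i)) := by
          rw [prod_mul_distrib, hreindex (fun i => (b : ℤ) + a + i)]
      _ ≡ ∏ i ∈ S, (((b : ℤ) + i) * ((b : ℤ) + σ i)) [ZMOD p ^ (2 * r)] := by
          refine Int.ModEq.prod fun i hi => (Int.modEq_iff_dvd.mpr ?_)
          obtain ⟨-, -, hdvd⟩ := hσ i (mem_filter.mp hi).1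
          have h1 : (p : ℤ) ^ r ∣ a := by exact_mod_cast ha
          have h2 : (p : ℤ) ^ r ∣ 2 * b + i + σ i + a :=
            dvd_add (by exact_mod_cast ha.trans hdvd) h1
          rw [pow_mul', sq]
          exact (dvd_neg.mpr (mul_dvd_mul h1 h2)).trans (dvd_of_eq (by ring))
      _ = Y * Y := by rw [prod_mul_distrib, hreindex (fun i => (b : ℤ) + i)]
  have hXY : X ≡ Y [ZMOD p] :=
    Int.ModEq.prod fun i _ => Int.modEq_iff_dvd.mpr
      ((dvd_neg.mpr (Int.natCast_dvd_natCast.mpr hpa)).trans (dvd_of_eq (by ring)))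
  have hY : ¬ (p : ℤ) ∣ Y := by
    rw [hpZ.dvd_finsetProd_iff]
    rintro ⟨i, hi, hpi⟩
    exact (mem_filter.mp hi).2 (by exact_mod_cast hpi)
  have hcop : IsCoprime ((p : ℤ) ^ (2 * r)) (Y + X) := by
    refine IsCoprime.pow_left ((Prime.coprime_iff_not_dvd hpZ).mpr fun hdvd => ?_)
    have h2Y : (p : ℤ) ∣ 2 * Y :=
      (dvd_add ((Int.ModEq.refl Y).add hXY).dvd hdvd).trans (dvd_of_eq (by ring))
    rcases hpZ.dvd_or_dvd h2Y with h2 | h2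
    · exact hp2 ((Nat.prime_dvd_prime_iff_eq hp Nat.prime_two).mp (by exact_mod_cast h2))
    · exact hY h2
  refine Int.modEq_iff_dvd.mpr (hcop.dvd_of_dvd_mul_right ?_)
  exact hsq.dvd.trans (dvd_of_eq (by ring))

namespace PadicInt

variable {p : ℕ} [Fact p.Prime]

theorem isUnit_natCast_iff {k : ℕ} : IsUnit (k : ℤ_[p]) ↔ ¬ p ∣ k := by
  rw [← not_iff_not, not_not, not_isUnit_iff, norm_natCast_lt_one_iff]

theorem isClopen_setOf_isUnit : IsClopen {x : ℤ_[p] | IsUnit x} := by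
  convert (IsUltrametricDist.isClopen_ball (0 : ℤ_[p]) 1).compl
  ext x
  simp [← not_isUnit_iff]

theorem not_isUnit_add_natCast_iff {x y : ℤ_[p]} {s : ℕ} (hs : s < p) (hxy : x + s = p * y)
    (i : ℕ) : ¬ IsUnit (x + i) ↔ i % p = s := by
  have : x + i = p * y + ((i - s : ℤ) : ℤ_[p]) := by push_cast; linear_combination hxy
  rw [not_isUnit_iff, norm_lt_one_iff_dvd, this, dvd_add_right (dvd_mul_right _ _),
    ← norm_lt_one_iff_dvd, norm_int_lt_one_iff_dvd, ← Nat.modEq_iff_dvd, Nat.ModEq,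
    Nat.mod_eq_of_lt hs, eq_comm]

open scoped Classical in
theorem prod_filter_not_isUnit_add {x y : ℤ_[p]} {s K M : ℕ} (hs : s < p) (hxy : x + s = p * y)
    (hM : M ≤ s + p * K) (hM' : s + p * K < M + p) :
    ∏ i ∈ (range M).filter (fun i : ℕ => ¬ IsUnit (x + i)), (x + i) =
      p ^ K * ∏ j ∈ range K, (y + j) := by
  have hp : 0 < p := (Fact.out : p.Prime).pos
  rw [filter_congr fun i _ => not_isUnit_add_natCast_iff hs hxy i,
    filter_range_mod_eq_image hs hM hM', prod_image fun j _ k _ h => by simpa [hp.ne'] using h]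
  trans ∏ j ∈ range K, (p * (y + j))
  · exact prod_congr rfl fun j _ => by push_cast; linear_combination hxy
  · rw [← pow_card_mul_prod, card_range]

end PadicInt

structure IsMoritaGamma {p : ℕ} [Fact p.Prime] (G : ℤ_[p] → ℤ_[p]) : Prop where
  continuous : Continuous G
  natCast : ∀ n : ℕ,
    G n = (-1) ^ n * ∏ k ∈ (range n).filter (fun k => ¬ p ∣ k), (k : ℤ_[p])

namespace IsMoritaGamma

open PadicInt

variable {p : ℕ} [Fact p.Prime] {G : ℤ_[p] → ℤ_[p]}

theorem natCast_add_one (hG : IsMoritaGamma G) (n : ℕ) :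
    G (n + 1) = -(if p ∣ n then 1 else (n : ℤ_[p])) * G n := by
  rw [← Nat.cast_succ, hG.natCast, hG.natCast, range_add_one, filter_insert]
  by_cases h : p ∣ n
  · simp [h, pow_succ]
  · simp [h, pow_succ]; ring

open scoped Classical in
theorem add_one (hG : IsMoritaGamma G) (x : ℤ_[p]) :
    G (x + 1) = -(if IsUnit x then x else 1) * G x := by
  have hc : Continuous fun x : ℤ_[p] => if IsUnit x then x else 1 :=
    continuous_id.if (by simp [isClopen_setOf_isUnit.frontier_eq]) continuous_const
  refine PadicInt.denseRange_natCast.induction_on x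
    (isClosed_eq (hG.continuous.comp (continuous_add_const 1)) (hc.neg.mul hG.continuous))
    fun n => ?_
  simp only [hG.natCast_add_one, isUnit_natCast_iff, ite_not]

theorem add_one_of_isUnit (hG : IsMoritaGamma G) {x : ℤ_[p]} (hx : IsUnit x) :
    G (x + 1) = -x * G x := by
  simp [hG.add_one, hx]

theorem add_one_of_not_isUnit (hG : IsMoritaGamma G) {x : ℤ_[p]} (hx : ¬ IsUnit x) :
    G (x + 1) = -G x := by
  simp [hG.add_one, hx]

theorem norm_eq_one (hG : IsMoritaGamma G) (x : ℤ_[p]) : ‖G x‖ = 1 := by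
  refine PadicInt.denseRange_natCast.induction_on x
    (isClosed_eq (continuous_norm.comp hG.continuous) continuous_const) fun n => ?_
  rw [hG.natCast, norm_mul, norm_pow, norm_neg, norm_one, one_pow, one_mul, norm_prod]
  exact prod_eq_one fun k hk => isUnit_iff.mp (isUnit_natCast_iff.mpr (mem_filter.mp hk).2)

open scoped Classical in
theorem add_natCast (hG : IsMoritaGamma G) (x : ℤ_[p]) (M : ℕ) :
    G (x + M) =
      (-1) ^ M * G x * ∏ i ∈ (range M).filter (fun i : ℕ => IsUnit (x + i)), (x + i) := by
  induction M with
  | zero => simp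
  | succ M ih =>
    rw [Nat.cast_succ, ← add_assoc, hG.add_one, ih, range_add_one, filter_insert]
    split_ifs with h
    · rw [prod_insert (by simp)]; ring
    · ring

open scoped Classical in
theorem prod_range_add_mul (hG : IsMoritaGamma G) (x : ℤ_[p]) (M : ℕ) :
    (∏ i ∈ range M, (x + i)) * G x = (-1) ^ M * G (x + M) *
      ∏ i ∈ (range M).filter (fun i : ℕ => ¬ IsUnit (x + i)), (x + i) := by
  rw [hG.add_natCast, ← prod_filter_mul_prod_filter_not (range M) (fun i : ℕ => IsUnit (x + i))]
  ring_nf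
  rw [pow_mul', neg_one_sq, one_pow, mul_one]

theorem prod_range_add_mul_eq_pow_mul (hG : IsMoritaGamma G) {x y : ℤ_[p]} {s K M : ℕ}
    (hs : s < p) (hxy : x + s = p * y) (hM : M ≤ s + p * K) (hM' : s + p * K < M + p) :
    (∏ i ∈ range M, (x + i)) * G x =
      (-1) ^ M * G (x + M) * (p ^ K * ∏ j ∈ range K, (y + j)) := by
  rw [hG.prod_range_add_mul, prod_filter_not_isUnit_add hs hxy hM hM']

open scoped Classical in
theorem mul_one_sub_add_one (hG : IsMoritaGamma G) (x : ℤ_[p]) :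
    G (x + 1) * G (1 - (x + 1)) = (if IsUnit x then -1 else 1) * (G x * G (1 - x)) := by
  rw [show 1 - (x + 1) = -x by ring, show 1 - x = -x + 1 by ring]
  by_cases hx : IsUnit x
  · rw [hG.add_one_of_isUnit hx, hG.add_one_of_isUnit hx.neg, if_pos hx]; ring
  · rw [hG.add_one_of_not_isUnit hx, hG.add_one_of_not_isUnit (by rwa [IsUnit.neg_iff]), if_neg hx]
    ring

theorem mul_one_sub_sq (hG : IsMoritaGamma G) (x : ℤ_[p]) : (G x * G (1 - x)) ^ 2 = 1 := by
  have := hG.continuous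
  refine PadicInt.denseRange_natCast.induction_on x
    (isClosed_eq (by fun_prop) continuous_const) fun n => ?_
  induction n with
  | zero =>
    have h0 : G 0 = 1 := by simpa using hG.natCast 0
    have h1 : G 1 = -1 := by simpa [filter_singleton] using hG.natCast 1
    simp [h0, h1]
  | succ n ih =>
    rw [Nat.cast_succ, hG.mul_one_sub_add_one, mul_pow, ih]
    split_ifs <;> norm_num

open scoped Classical in
theorem mul_one_sub_add_natCast (hG : IsMoritaGamma G) (x : ℤ_[p]) (n : ℕ) :
    G (x + n) * G (1 - (x + n)) =
      (∏ i ∈ range n, if IsUnit (x + i) then -1 else 1) * (G x * G (1 - x)) := by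
  induction n with
  | zero => simp
  | succ n ih =>
    rw [Nat.cast_succ, ← add_assoc, hG.mul_one_sub_add_one, ih, prod_range_succ]
    ring

theorem mul_one_sub_add_p_mul (hG : IsMoritaGamma G) (hp2 : p ≠ 2) (x u : ℤ_[p]) :
    G (x + p * u) * G (1 - (x + p * u)) = G x * G (1 - x) := by
  have := hG.continuous
  refine PadicInt.denseRange_natCast.induction_on₂
    (p := fun x u => G (x + p * u) * G (1 - (x + p * u)) = G x * G (1 - x))
    (isClosed_eq (by fun_prop) (by fun_prop)) (fun n t => ?_) x u
  induction t with
  | zero => simp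
  | succ t ih =>
    have : (n : ℤ_[p]) + p * (t + 1 : ℕ) = (n + p * t : ℕ) + p := by push_cast; ring
    rw [this, hG.mul_one_sub_add_natCast,
      prod_congr rfl (g := fun i => if p ∣ n + p * t + i then 1 else -1) fun i _ => by
        simp only [← Nat.cast_add, isUnit_natCast_iff, ite_not],
      prod_range_ite_dvd_add Fact.out hp2, one_mul]
    push_cast
    exact ih

open scoped Classical in
theorem norm_natCast_mul_sub_sq_le (hG : IsMoritaGamma G) (hp2 : p ≠ 2) {r a : ℕ} (hr : 0 < r)
    (ha : p ^ r ∣ a) (b : ℕ) :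
    ‖G (b + a + a) * G b - G (b + a) ^ 2‖ ≤ (p : ℝ) ^ (-(2 * r : ℤ)) := by
  have hpa : p ∣ a := (dvd_pow_self p hr.ne').trans ha
  set S := (range a).filter (fun i => ¬ p ∣ b + i)
  have hX := hG.add_natCast ((b : ℤ_[p]) + a) a
  have hY := hG.add_natCast (b : ℤ_[p]) a
  rw [filter_congr (q := fun i => ¬ p ∣ b + i) fun i _ => by
    rw [← Nat.cast_add, ← Nat.cast_add, isUnit_natCast_iff, add_right_comm,
      Nat.dvd_add_left hpa]] at hX
  rw [filter_congr (q := fun i => ¬ p ∣ b + i) fun i _ => by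
    rw [← Nat.cast_add, isUnit_natCast_iff]] at hY
  have key : G (b + a + a) * G b - G (b + a) ^ 2 = (-1) ^ a * G b * G (b + a) *
      ((∏ i ∈ S, ((b : ℤ) + a + i) - ∏ i ∈ S, ((b : ℤ) + i) : ℤ) : ℤ_[p]) := by
    push_cast
    linear_combination G b * hX - G (b + a) * hY
  have hdvd := (prod_filter_range_add_modEq Fact.out hp2 hr ha b).symm.dvd
  rw [key, norm_mul, show ‖(-1 : ℤ_[p]) ^ a * G b * G (b + a)‖ = 1 by simp [hG.norm_eq_one],
    one_mul, show (-(2 * r : ℤ)) = -((2 * r : ℕ) : ℤ) by push_cast; ring]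
  exact norm_int_le_pow_iff_dvd.mpr (by exact_mod_cast hdvd)

theorem norm_mul_sub_sq_le (hG : IsMoritaGamma G) (hp2 : p ≠ 2) {r : ℕ} (hr : 0 < r)
    (x u : ℤ_[p]) :
    ‖G (x + p ^ r * u) * G (x - p ^ r * u) - G x ^ 2‖ ≤ (p : ℝ) ^ (-(2 * r : ℤ)) := by
  have := hG.continuous
  have key := PadicInt.denseRange_natCast.induction_on₂
    (p := fun y v => ‖G (y + p ^ r * v + p ^ r * v) * G y - G (y + p ^ r * v) ^ 2‖ ≤
      (p : ℝ) ^ (-(2 * r : ℤ)))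
    (isClosed_le (by fun_prop) continuous_const)
    (fun b c => by
      have := hG.norm_natCast_mul_sub_sq_le hp2 hr (dvd_mul_right (p ^ r) c) b
      push_cast at this
      exact this) (x - p ^ r * u) u
  simpa only [sub_add_cancel] using key

theorem norm_mul_sub_pow_four_mul_le (hG : IsMoritaGamma G) (hp2 : p ≠ 2) {r : ℕ} (hr : 0 < r)
    (x u : ℤ_[p]) :
    ‖G x * G (x + p ^ r * u) - G x ^ 4 * (G (1 - x) * G (1 - x + p ^ r * u))‖ ≤
      (p : ℝ) ^ (-(2 * r : ℤ)) := by
  have hrefl : G (x - p ^ r * u) * G (1 - x + p ^ r * u) = G x * G (1 - x) := by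
    have := hG.mul_one_sub_add_p_mul hp2 (x - p ^ r * u) (p ^ (r - 1) * u)
    rw [← mul_assoc, ← pow_succ', Nat.sub_add_cancel hr, sub_add_cancel,
      show 1 - (x - p ^ r * u) = 1 - x + p ^ r * u by ring] at this
    exact this.symm
  -- multiplying by the unit `G (x - p ^ r * u) * G x` leaves `G x ^ 2` times the symmetric defect
  have key : (G x * G (x + p ^ r * u) - G x ^ 4 * (G (1 - x) * G (1 - x + p ^ r * u))) *
      (G (x - p ^ r * u) * G x) = G x ^ 2 * (G (x + p ^ r * u) * G (x - p ^ r * u) - G x ^ 2) := by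
    linear_combination (-(G x ^ 5 * G (1 - x))) * hrefl - G x ^ 4 * hG.mul_one_sub_sq x
  calc _ = ‖(G x * G (x + p ^ r * u) - G x ^ 4 * (G (1 - x) * G (1 - x + p ^ r * u))) *
        (G (x - p ^ r * u) * G x)‖ := by
        rw [norm_mul _ (_ * _), norm_mul, hG.norm_eq_one, hG.norm_eq_one, mul_one, mul_one]
    _ = ‖G (x + p ^ r * u) * G (x - p ^ r * u) - G x ^ 2‖ := by
        rw [key, norm_mul, norm_pow, hG.norm_eq_one, one_pow, one_mul]
    _ ≤ _ := hG.norm_mul_sub_sq_le hp2 hr x u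

theorem prod_range_quarter_identity (hG : IsMoritaGamma G) {q : ℤ_[p]} (hq : 4 * q = 1)
    {t M N : ℕ} (hpt : p = 4 * t + 5) (hM : M = p * N + 2 * t + 2) :
    p * (∏ i ∈ range M, (1 - q + i)) * (∏ i ∈ range N, (1 + q + i)) *
        (G (1 - q) * G (1 - q + (2 * M + 1) * (2 * q))) =
      -(G q * G (q + (2 * M + 1) * (2 * q))) *
        ((∏ i ∈ range M, (1 + q + i)) * ∏ i ∈ range N, (1 - q + i)) := by
  have hpc : (p : ℤ_[p]) = 4 * t + 5 := by exact_mod_cast hpt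
  -- `3/4 + i` is a non-unit iff `i ≡ 3t+3`, and `5/4 + i` iff `i ≡ t (mod p)`
  have h3 := hG.prod_range_add_mul_eq_pow_mul (x := 1 - q) (y := 1 - q) (s := 3 * t + 3) (K := N)
    (M := M) (by omega) (by rw [hpc]; push_cast; linear_combination (t + 1) * hq) (by omega)
    (by omega)
  have h5 := hG.prod_range_add_mul_eq_pow_mul (x := 1 + q) (y := q) (s := t) (K := N + 1) (M := M)
    (by omega) (by rw [hpc]; linear_combination (-t - 1) * hq)
    (by rw [mul_add, mul_one]; omega) (by rw [mul_add, mul_one]; omega)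
  rw [show 1 - q + (M : ℤ_[p]) = q + (2 * M + 1) * (2 * q) by
    linear_combination (-1 - M : ℤ_[p]) * hq] at h3
  rw [show 1 + q + (M : ℤ_[p]) = 1 - q + (2 * M + 1) * (2 * q) by
    linear_combination (-M : ℤ_[p]) * hq, prod_range_succ', Nat.cast_zero, add_zero] at h5
  have hq5 : G (1 + q) = -q * G q := by
    rw [add_comm]
    exact hG.add_one_of_isUnit (IsUnit.of_mul_eq_one 4 (by rw [mul_comm, hq]))
  rw [prod_congr rfl fun j _ => show q + ((j + 1 : ℕ) : ℤ_[p]) = 1 + q + j by push_cast; ring]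
    at h5
  apply mul_left_cancel₀ (left_ne_zero_of_mul_eq_one (mul_comm 4 q ▸ hq))
  linear_combination
    (q * p * (∏ i ∈ range N, (1 + q + i)) * G (1 - q + (2 * M + 1) * (2 * q))) * h3 -
    (G (q + (2 * M + 1) * (2 * q)) * ∏ i ∈ range N, (1 - q + i)) * h5 +
    (G (q + (2 * M + 1) * (2 * q)) * (∏ i ∈ range N, (1 - q + i)) *
      ∏ i ∈ range M, (1 + q + i)) * hq5

end IsMoritaGamma

section asc

variable {p : ℕ} [Fact p.Prime]

theorem asc_coe (x : ℤ_[p]) (n : ℕ) :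
    asc (x : ℚ_[p]) n = ((∏ i ∈ range n, (x + i) : ℤ_[p]) : ℚ_[p]) := by
  change _ = PadicInt.Coe.ringHom _
  simp only [asc, map_prod, map_add, map_natCast]
  rfl

theorem asc_ne_zero {a : ℚ} (ha : 0 < a) (n : ℕ) : asc (a : ℚ_[p]) n ≠ 0 :=
  prod_ne_zero_iff.mpr fun i _ => by exact_mod_cast (by positivity : a + i ≠ 0)

theorem IsMoritaGamma.asc_quotient_eq {G : ℤ_[p] → ℤ_[p]} (hG : IsMoritaGamma G)
    (hp4 : p % 4 = 1) {q : ℤ_[p]} (hq : 4 * q = 1) (r : ℕ) :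
    (p : ℚ_[p]) * asc (3 / 4) ((p ^ (r + 1) - 1) / 2) * asc (5 / 4) ((p ^ r - 1) / 2) /
        (asc (5 / 4) ((p ^ (r + 1) - 1) / 2) * asc (3 / 4) ((p ^ r - 1) / 2)) =
      -((G q * G (q + p ^ (r + 1) * (2 * q)) : ℤ_[p]) : ℚ_[p]) /
        ((G (1 - q) * G (1 - q + p ^ (r + 1) * (2 * q)) : ℤ_[p]) : ℚ_[p]) := by
  have hp : p.Prime := Fact.out
  obtain ⟨t, hpt⟩ : ∃ t, p = 4 * t + 5 := ⟨p / 4 - 1, by have := hp.two_le; omega⟩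
  obtain ⟨N, hN⟩ : Odd (p ^ r) := (hpt ▸ ⟨2 * t + 2, by ring⟩ : Odd p).pow
  have hMN : p ^ (r + 1) = 2 * (p * N + 2 * t + 2) + 1 := by rw [pow_succ, hN, hpt]; ring
  have hMp : (p : ℤ_[p]) ^ (r + 1) = 2 * ((p * N + 2 * t + 2 : ℕ) : ℤ_[p]) + 1 := by
    exact_mod_cast hMN
  have hq' : (4 : ℚ_[p]) * q = 1 := by exact_mod_cast congrArg ((↑) : ℤ_[p] → ℚ_[p]) hq
  have h34 : (3 / 4 : ℚ_[p]) = ((1 - q : ℤ_[p]) : ℚ_[p]) := by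
    push_cast; linear_combination (1 / 4 : ℚ_[p]) * hq'
  have h54 : (5 / 4 : ℚ_[p]) = ((1 + q : ℤ_[p]) : ℚ_[p]) := by
    push_cast; linear_combination (-1 / 4 : ℚ_[p]) * hq'
  have hden : asc (5 / 4 : ℚ_[p]) ((p ^ (r + 1) - 1) / 2) * asc (3 / 4) ((p ^ r - 1) / 2) ≠ 0 :=
    mul_ne_zero (by simpa using asc_ne_zero (p := p) (a := 5 / 4) (by norm_num) _)
      (by simpa using asc_ne_zero (p := p) (a := 3 / 4) (by norm_num) _)
  have hGden : ((G (1 - q) * G (1 - q + p ^ (r + 1) * (2 * q)) : ℤ_[p]) : ℚ_[p]) ≠ 0 := by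
    rw [← norm_ne_zero_iff, PadicInt.padic_norm_e_of_padicInt, norm_mul, hG.norm_eq_one,
      hG.norm_eq_one]
    norm_num
  rw [div_eq_div_iff hden hGden, show (p ^ r - 1) / 2 = N by omega,
    show (p ^ (r + 1) - 1) / 2 = p * N + 2 * t + 2 by omega, h34, h54, asc_coe, asc_coe, asc_coe,
    asc_coe, hMp]
  exact_mod_cast
    congrArg ((↑) : ℤ_[p] → ℚ_[p]) (hG.prod_range_quarter_identity (N := N) hq hpt rfl)

end asc

/-- for a prime `p ≡ 1 (mod 4)` and `r ≥ 1`, with `Γₚ` Morita's p-adic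
Gamma function (characterized as the continuous function on `ℤ_p` with
`Γₚ(n) = (-1)^n ∏_{0<k<n, p∤k} k`), one has
`p·(3/4)_{(p^r-1)/2}(5/4)_{(p^{r-1}-1)/2}/((5/4)_{(p^r-1)/2}(3/4)_{(p^{r-1}-1)/2})
  ≡ -Γₚ(1/4)^4 (mod p^{2r})`. -/
theorem stmt4 (p : ℕ) [Fact p.Prime] (hp4 : p % 4 = 1) (r : ℕ) (hr : 0 < r)
    (G : ℤ_[p] → ℤ_[p]) (hGcont : Continuous G)
    (hGval : ∀ n : ℕ, G n =
      (-1) ^ n * ∏ k ∈ (Finset.range n).filter (fun k => ¬ p ∣ k), (k : ℤ_[p]))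
    (quarter : ℤ_[p]) (hquarter : 4 * quarter = 1) :
    ‖(p : ℚ_[p]) * asc (3/4) ((p ^ r - 1) / 2) * asc (5/4) ((p ^ (r - 1) - 1) / 2)
        / (asc (5/4) ((p ^ r - 1) / 2) * asc (3/4) ((p ^ (r - 1) - 1) / 2))
      - (-(G quarter : ℚ_[p]) ^ 4)‖ ≤ (p : ℝ) ^ (-(2 * r : ℤ)) := by
  have hG : IsMoritaGamma G := ⟨hGcont, hGval⟩
  obtain ⟨r, rfl⟩ : ∃ r', r = r' + 1 := ⟨r - 1, by omega⟩
  rw [Nat.add_sub_cancel, hG.asc_quotient_eq hp4 hquarter r]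
  set h := (p : ℤ_[p]) ^ (r + 1) * (2 * quarter)
  set γ := G quarter
  set den := G (1 - quarter) * G (1 - quarter + h)
  have hden : ‖(den : ℚ_[p])‖ = 1 := by
    rw [PadicInt.padic_norm_e_of_padicInt, norm_mul, hG.norm_eq_one, hG.norm_eq_one, one_mul]
  rw [div_sub' (norm_ne_zero_iff.mp (by rw [hden]; exact one_ne_zero)), norm_div, hden, div_one]
  calc _ = ‖((γ * G (quarter + h) - γ ^ 4 * den : ℤ_[p]) : ℚ_[p])‖ := by
        rw [← norm_neg]; congr 1; push_cast; ring
    _ ≤ _ := by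
      rw [PadicInt.padic_norm_e_of_padicInt]
      exact hG.norm_mul_sub_pow_four_mul_le (by omega) r.succ_pos quarter (2 * quarter)
end

section
/- For any odd prime p and any x ∈ Z_p, Γ_p(x)·Γ_p(1-x) = (-1)^{a_0(x)}, where a_0(x) is the unique integer with 1 ≤ a_0(x) ≤ p and a_0(x) ≡ x (mod p). -/
open Finset

/-! The product `f y = Γ_p(y) Γ_p(1 - y)` satisfies `f (y + 1) = f y` when `p ∣ y` and
`f (y + 1) = -f y` otherwise, by the functional equation `Γ_p(y + 1) = -h_p(y) Γ_p(y)` and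
`h_p(-y) = -h_p(y)` for `p ∤ y`. Starting from `f 1 = -1`, the sign flips at each step except
when passing a multiple of `p`; as `p` is odd, this gives `f (n + 1) = (-1) ^ ((n mod p) + 1)` on
`ℕ`. Both sides depend continuously on `n ∈ ℤ_p` (the right one only on `n mod p`), so the
formula holds on all of `ℤ_p` by density of `ℕ`. -/

namespace PadicInt

variable {p : ℕ} [Fact p.Prime]

lemma zmodRepr_eq_of_dvd_sub {x y : ℤ_[p]} (h : (p : ℤ_[p]) ∣ x - y) :
    x.zmodRepr = y.zmodRepr := by
  refine zmodRepr_unique _ _ (zmodRepr_lt_p y) ?_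
  rw [← sub_add_sub_cancel x y]
  exact Ideal.add_mem _ (by rwa [maximalIdeal_eq_span_p, Ideal.mem_span_singleton])
    (sub_zmodRepr_mem y)

lemma isLocallyConstant_zmodRepr : IsLocallyConstant (zmodRepr : ℤ_[p] → ℕ) := by
  refine (IsLocallyConstant.iff_eventually_eq _).2 fun x => ?_
  filter_upwards [Metric.ball_mem_nhds x one_pos] with y hy
  rw [Metric.mem_ball, dist_eq_norm, norm_lt_one_iff_dvd] at hy
  exact zmodRepr_eq_of_dvd_sub hy

lemma zmodRepr_neg_eq_zero_iff {y : ℤ_[p]} : (-y).zmodRepr = 0 ↔ y.zmodRepr = 0 := by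
  simp only [zmodRepr_eq_zero_iff_dvd, dvd_neg]

end PadicInt

section MoritaGamma

variable {p : ℕ} [Fact p.Prime]

structure IsMoritaGamma_s5 (p : ℕ) [Fact p.Prime] (G : ℤ_[p] → ℤ_[p]) : Prop where
  continuous : Continuous G
  natCast : ∀ n : ℕ,
    G n = (-1) ^ n * ∏ k ∈ (range n).filter (fun k => ¬ p ∣ k), (k : ℤ_[p])

/-- The factor `h_p` in the functional equation `Γ_p(y + 1) = -h_p(y) Γ_p(y)`. -/
noncomputable def moritaFactor (y : ℤ_[p]) : ℤ_[p] := if y.zmodRepr = 0 then 1 else y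

lemma continuous_moritaFactor : Continuous (moritaFactor : ℤ_[p] → ℤ_[p]) :=
  Continuous.if (fun y hy => by
    simp [(PadicInt.isLocallyConstant_zmodRepr.isClopen_fiber 0).frontier_eq] at hy)
    continuous_const continuous_id

lemma moritaFactor_neg_of_zmodRepr_ne_zero {y : ℤ_[p]} (hy : y.zmodRepr ≠ 0) :
    moritaFactor (-y) = -moritaFactor y := by
  simp only [moritaFactor, PadicInt.zmodRepr_neg_eq_zero_iff, if_neg hy]

namespace IsMoritaGamma_s5

variable {G : ℤ_[p] → ℤ_[p]}

lemma apply_natCast_add_one (hG : IsMoritaGamma_s5 p G) (n : ℕ) :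
    G (n + 1) = -moritaFactor (n : ℤ_[p]) * G n := by
  have hrepr : (n : ℤ_[p]).zmodRepr = 0 ↔ p ∣ n := by
    rw [PadicInt.zmodRepr_natCast, Nat.dvd_iff_mod_eq_zero]
  rw [← Nat.cast_add_one, hG.natCast, hG.natCast, range_add_one, filter_insert, moritaFactor]
  by_cases hn : p ∣ n
  · rw [if_pos (hrepr.2 hn), if_neg (not_not.2 hn)]
    ring
  · rw [if_neg (mt hrepr.1 hn), if_pos hn, prod_insert (by simp)]
    ring

lemma apply_zero (hG : IsMoritaGamma_s5 p G) : G 0 = 1 := by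
  simpa using hG.natCast 0

lemma apply_one (hG : IsMoritaGamma_s5 p G) : G 1 = -1 := by
  simpa [filter_singleton] using hG.natCast 1

lemma apply_add_one (hG : IsMoritaGamma_s5 p G) (y : ℤ_[p]) :
    G (y + 1) = -moritaFactor y * G y :=
  congrFun (PadicInt.denseRange_natCast.equalizer
    (hG.continuous.comp (continuous_add_const 1))
    ((continuous_moritaFactor.neg).mul hG.continuous)
    (funext hG.apply_natCast_add_one)) y

lemma reflection_add_one (hG : IsMoritaGamma_s5 p G) (y : ℤ_[p]) :
    G (y + 1) * G (1 - (y + 1)) =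
      (if y.zmodRepr = 0 then 1 else -1) * (G y * G (1 - y)) := by
  rw [show 1 - (y + 1) = -y by ring, show 1 - y = -y + 1 by ring, hG.apply_add_one,
    hG.apply_add_one]
  by_cases hy : y.zmodRepr = 0
  · simp only [moritaFactor, PadicInt.zmodRepr_neg_eq_zero_iff, if_pos hy]
    ring
  · rw [moritaFactor_neg_of_zmodRepr_ne_zero hy, if_neg hy]
    ring

lemma reflection_natCast_add_one (hG : IsMoritaGamma_s5 p G) (hodd : Odd p) (n : ℕ) :
    G (n + 1) * G (1 - (n + 1)) = (-1) ^ (n % p + 1) := by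
  induction n with
  | zero => simp [hG.apply_zero, hG.apply_one]
  | succ n ih =>
    rw [Nat.cast_succ, hG.reflection_add_one, ih, ← Nat.cast_add_one, PadicInt.zmodRepr_natCast]
    have hmod : (n + 1) % p = (n % p + 1) % p := by
      rw [Nat.add_mod, Nat.one_mod_eq_one.2 (Fact.out : p.Prime).ne_one]
    have hle : n % p + 1 ≤ p := Nat.mod_lt n (Fact.out : p.Prime).pos
    rcases hle.lt_or_eq with hlt | heq
    · rw [hmod, Nat.mod_eq_of_lt hlt, if_neg (n % p).succ_ne_zero, pow_succ _ (n % p + 1)]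
      ring
    · rw [hmod, heq, Nat.mod_self, if_pos rfl, hodd.neg_one_pow]
      ring

lemma reflection_eq_neg_one_pow (hG : IsMoritaGamma_s5 p G) (hodd : Odd p) (y : ℤ_[p]) :
    G (y + 1) * G (1 - (y + 1)) = (-1) ^ (y.zmodRepr + 1) := by
  refine congrFun (PadicInt.denseRange_natCast.equalizer
    (g := fun z => G (z + 1) * G (1 - (z + 1))) (h := fun z => (-1) ^ (z.zmodRepr + 1))
    ?_ ?_ ?_) y
  · exact (hG.continuous.comp (continuous_add_const 1)).mul
      (hG.continuous.comp (continuous_const.sub (continuous_add_const 1)))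
  · exact (PadicInt.isLocallyConstant_zmodRepr.comp fun k => (-1 : ℤ_[p]) ^ (k + 1)).continuous
  · funext n
    simp only [Function.comp_apply, PadicInt.zmodRepr_natCast]
    exact hG.reflection_natCast_add_one hodd n

end IsMoritaGamma_s5

end MoritaGamma

/-- for an odd prime `p`, any `x ∈ ℤ_p`, and `a₀` the integer with
`1 ≤ a₀ ≤ p` and `a₀ ≡ x (mod p)`, Morita's p-adic Gamma function (characterized as
the continuous `G : ℤ_p → ℤ_p` with `G(n) = (-1)^n ∏_{0<k<n, p∤k} k`) satisfies
`G(x)·G(1-x) = (-1)^{a₀}`. -/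
theorem stmt5 (p : ℕ) [Fact p.Prime] (hodd : Odd p)
    (G : ℤ_[p] → ℤ_[p]) (hGcont : Continuous G)
    (hGval : ∀ n : ℕ, G n =
      (-1) ^ n * ∏ k ∈ (Finset.range n).filter (fun k => ¬ p ∣ k), (k : ℤ_[p]))
    (x : ℤ_[p]) (a₀ : ℕ) (ha₁ : 1 ≤ a₀) (ha₂ : a₀ ≤ p)
    (hcong : (p : ℤ_[p]) ∣ (x - a₀)) :
    G x * G (1 - x) = (-1) ^ a₀ := by
  obtain ⟨a, rfl⟩ : ∃ a, a₀ = a + 1 := ⟨a₀ - 1, by omega⟩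
  have hrepr : (x - 1).zmodRepr = a := by
    have hx : (p : ℤ_[p]) ∣ x - 1 - a := by
      convert hcong using 1
      push_cast
      ring
    rw [PadicInt.zmodRepr_eq_of_dvd_sub hx, PadicInt.zmodRepr_natCast_of_lt (by omega)]
  simpa [hrepr] using (IsMoritaGamma_s5.mk hGcont hGval).reflection_eq_neg_one_pow hodd (x - 1)
end

section
/- Let n ≡ 1 (mod 4) be a positive integer. Then, modulo Φ_n(q)^2, one has (q^2;q^4)_{(n-1)/4}^2 / (q^4;q^4)_{(n-1)/4}^2 · q^{(n-1)/2} ≡ [n]_q · (q^3;q^4)_{(n-1)/2} / (q^5;q^4)_{(n-1)/2}, as a congruence of rational functions whose denominators are coprime to Φ_n(q). -/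
open Finset Polynomial

/-- The q-integer `[n]_q = (1-q^n)/(1-q)` in `ℚ(q)`. -/
noncomputable def qint (n : ℕ) : RatFunc ℚ :=
  (1 - RatFunc.X ^ n) / (1 - RatFunc.X)

/-!
Write `n = 4m + 1` and work in `ℚ[q]/(Φ_n²)`, where `w = 1 - q^n` satisfies `w² = 0` and every
`1 - q^k` with `n ∤ k` is a unit. To first order in `w`,
`1 - q^(n+k) = (1 - q^k)(1 + q^k w/(1 - q^k))`, and for `j + k = n`,
`q^j (1 - q^k) = -(1 - q^j)(1 - w/(1 - q^j))`. Clearing denominators, the congruence becomes an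
identity between products in this ring; after these substitutions the zeroth-order terms agree,
and the first-order terms cancel because `w (1/(1 - q^j) + 1/(1 - q^k)) = w` whenever `j + k = n`.
-/

theorem prod_one_add_mul_of_mul_self_eq_zero {ι R : Type*} [CommRing R] {w : R} (hw : w * w = 0)
    (s : Finset ι) (z : ι → R) :
    ∏ i ∈ s, (1 + z i * w) = 1 + (∑ i ∈ s, z i) * w := by
  classical
  induction s using Finset.induction_on with
  | empty => simp
  | insert i s hi ih =>
    rw [prod_insert hi, sum_insert hi, ih]
    linear_combination z i * (∑ j ∈ s, z j) * hw

/-- `poch4 q a k = (q^a; q^4)_k`, over any commutative ring. -/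
def poch4 {R : Type*} [CommRing R] (q : R) (a k : ℕ) : R :=
  ∏ i ∈ range k, (1 - q ^ (4 * i + a))

/-- `invSum4 q a k = ∑_{i<k} 1/(1 - q^(4i+a))`, where `Ring.inverse` is `0` at non-units. -/
noncomputable def invSum4 {R : Type*} [CommRing R] (q : R) (a k : ℕ) : R :=
  ∑ i ∈ range k, Ring.inverse (1 - q ^ (4 * i + a))

section poch4

variable {R : Type*} [CommRing R]

theorem map_poch4 {S : Type*} [CommRing S] (f : R →+* S) (q : R) (a k : ℕ) :
    f (poch4 q a k) = poch4 (f q) a k := by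
  simp [poch4, map_prod]

theorem poch4_add (q : R) (a k l : ℕ) :
    poch4 q a (k + l) = poch4 q a k * poch4 q (4 * k + a) l := by
  rw [poch4, prod_range_add]
  exact congrArg _ (prod_congr rfl fun i _ => by ring_nf)

theorem poch4_succ (q : R) (a k : ℕ) :
    poch4 q a (k + 1) = poch4 q a k * (1 - q ^ (4 * k + a)) :=
  prod_range_succ _ _

theorem poch4_succ' (q : R) (a k : ℕ) :
    poch4 q a (k + 1) = (1 - q ^ a) * poch4 q (a + 4) k := by
  rw [poch4, prod_range_succ', mul_comm, mul_zero, zero_add]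
  exact congrArg _ (prod_congr rfl fun i _ => by ring_nf)

theorem poch4_ne_zero {K : Type*} [Field K] {x : K} (hx : ∀ k, 0 < k → 1 - x ^ k ≠ 0)
    {a : ℕ} (ha : 0 < a) (k : ℕ) : poch4 x a k ≠ 0 :=
  prod_ne_zero_iff.2 fun i _ => hx _ (by omega)

end poch4

section SquareZero

variable {R : Type*} [CommRing R] {q w : R} {N : ℕ}

theorem one_sub_pow_add_eq (hqN : q ^ N = 1 - w) {k : ℕ} (hk : IsUnit (1 - q ^ k)) :
    1 - q ^ (N + k) = (1 - q ^ k) * (1 + (Ring.inverse (1 - q ^ k) - 1) * w) := by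
  rw [pow_add, hqN]
  linear_combination (-w) * Ring.mul_inverse_cancel _ hk

theorem pow_mul_one_sub_pow_eq (hqN : q ^ N = 1 - w) {j k : ℕ} (hjk : j + k = N)
    (hj : IsUnit (1 - q ^ j)) :
    q ^ j * (1 - q ^ k) = -(1 - q ^ j) * (1 - Ring.inverse (1 - q ^ j) * w) := by
  have hqjk : q ^ j * q ^ k = 1 - w := by rw [← pow_add, hjk, hqN]
  linear_combination -hqjk - w * Ring.mul_inverse_cancel _ hj

theorem mul_inverse_add_inverse (hw : w * w = 0) (hqN : q ^ N = 1 - w) {j k : ℕ}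
    (hjk : j + k = N) (hj : IsUnit (1 - q ^ j)) (hk : IsUnit (1 - q ^ k)) :
    w * (Ring.inverse (1 - q ^ j) + Ring.inverse (1 - q ^ k)) = w := by
  have hqjk : q ^ j * q ^ k = 1 - w := by rw [← pow_add, hjk, hqN]
  have ej := Ring.mul_inverse_cancel _ hj
  have ek := Ring.mul_inverse_cancel _ hk
  set vj := Ring.inverse (1 - q ^ j)
  set vk := Ring.inverse (1 - q ^ k)
  linear_combination (vj * vk) * hw - (w * vj * vk) * hqjk
    - (w * q ^ j * vj) * ek - (w * vk - w) * ej

variable {a b k : ℕ}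

theorem poch4_shift_eq (hw : w * w = 0) (hqN : q ^ N = 1 - w)
    (ha : ∀ i < k, IsUnit (1 - q ^ (4 * i + a))) :
    poch4 q (N + a) k = poch4 q a k * (1 + (invSum4 q a k - k) * w) := by
  have h : ∀ i ∈ range k, 1 - q ^ (4 * i + (N + a)) =
      (1 - q ^ (4 * i + a)) * (1 + (Ring.inverse (1 - q ^ (4 * i + a)) - 1) * w) := fun i hi => by
    rw [add_left_comm]; exact one_sub_pow_add_eq hqN (ha i (mem_range.1 hi))
  rw [poch4, prod_congr rfl h, prod_mul_distrib, prod_one_add_mul_of_mul_self_eq_zero hw,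
    sum_sub_distrib, sum_const, card_range, nsmul_one]
  rfl

theorem prod_pow_mul_poch4_eq (hw : w * w = 0) (hqN : q ^ N = 1 - w) (hN : 4 * k + a + b = N + 4)
    (ha : ∀ i < k, IsUnit (1 - q ^ (4 * i + a))) :
    (∏ i ∈ range k, q ^ (4 * i + a)) * poch4 q b k =
      (-1) ^ k * poch4 q a k * (1 - invSum4 q a k * w) := by
  rw [poch4, poch4, invSum4, ← prod_range_reflect (fun i => 1 - q ^ (4 * i + b)),
    ← prod_mul_distrib,
    prod_congr rfl fun i hi => pow_mul_one_sub_pow_eq hqN (by have := mem_range.1 hi; omega)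
      (ha i (mem_range.1 hi))]
  simp only [prod_neg, prod_mul_distrib, sub_eq_add_neg, ← neg_mul]
  rw [prod_one_add_mul_of_mul_self_eq_zero hw, sum_neg_distrib, card_range]

theorem mul_invSum4_add_invSum4 (hw : w * w = 0) (hqN : q ^ N = 1 - w)
    (hN : 4 * k + a + b = N + 4) (ha : ∀ i < k, IsUnit (1 - q ^ (4 * i + a)))
    (hb : ∀ i < k, IsUnit (1 - q ^ (4 * i + b))) :
    w * (invSum4 q a k + invSum4 q b k) = k * w := by
  rw [invSum4, invSum4, ← sum_range_reflect (fun i => Ring.inverse (1 - q ^ (4 * i + b))),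
    ← sum_add_distrib, mul_sum, sum_congr rfl fun i hi => mul_inverse_add_inverse hw hqN
      (by have := mem_range.1 hi; omega) (ha i (mem_range.1 hi))
      (hb _ (by have := mem_range.1 hi; omega))]
  simp

end SquareZero

theorem poch4_identity_of_sq_eq_zero {R : Type*} [CommRing R] {q : R} {m : ℕ}
    (hsq : (1 - q ^ (4 * m + 1)) ^ 2 = 0)
    (hunit : ∀ k, 0 < k → k < 4 * m + 1 → IsUnit (1 - q ^ k)) :
    poch4 q 2 m ^ 2 * q ^ (2 * m) * poch4 q 1 m * poch4 q (4 * m + 5) m =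
      poch4 q 3 m * poch4 q (4 * m + 3) m * poch4 q 4 m ^ 2 := by
  obtain ⟨w, hqN⟩ : ∃ w, q ^ (4 * m + 1) = 1 - w := ⟨_, (sub_sub_cancel 1 _).symm⟩
  have hw : w * w = 0 := by rw [← sq, ← hsq, hqN, sub_sub_cancel]
  have hu : ∀ a, 0 < a → a ≤ 4 → ∀ i < m, IsUnit (1 - q ^ (4 * i + a)) :=
    fun a ha ha4 i hi => hunit _ (by omega) (by omega)
  have hq : IsUnit q := .of_mul_eq_one (q ^ (4 * m) * (1 + w)) <| by
    linear_combination hqN * (1 + w) - hw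
  have hQ1 : IsUnit (∏ i ∈ range m, q ^ (4 * i + 1)) := by
    rw [prod_pow_eq_pow_sum]; exact hq.pow _
  have hQ3 :
      ∏ i ∈ range m, q ^ (4 * i + 3) = q ^ (2 * m) * ∏ i ∈ range m, q ^ (4 * i + 1) := by
    simp only [pow_add _ (4 * _), prod_mul_distrib, prod_const, card_range, ← pow_mul]
    ring
  have h14 := prod_pow_mul_poch4_eq hw hqN (a := 1) (b := 4) (by omega) (hu 1 one_pos le_add_self)
  have h32 := prod_pow_mul_poch4_eq hw hqN (a := 3) (b := 2) (by omega)
    (hu 3 (by norm_num) (by norm_num))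
  have s14 := mul_invSum4_add_invSum4 hw hqN (a := 1) (b := 4) (by omega)
    (hu 1 one_pos le_add_self) (hu 4 (by norm_num) le_rfl)
  have s32 := mul_invSum4_add_invSum4 hw hqN (a := 3) (b := 2) (by omega)
    (hu 3 (by norm_num) (by norm_num)) (hu 2 (by norm_num) (by norm_num))
  rw [show 4 * m + 5 = 4 * m + 1 + 4 by ring, show 4 * m + 3 = 4 * m + 1 + 2 by ring,
    poch4_shift_eq hw hqN (hu 4 (by norm_num) le_rfl),
    poch4_shift_eq hw hqN (hu 2 (by norm_num) (by norm_num))]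
  refine hQ1.mul_left_cancel ?_
  linear_combination
    (-(poch4 q 2 m ^ 2 * poch4 q 1 m * poch4 q 4 m * (1 + (invSum4 q 4 m - m) * w))) * hQ3
    + (poch4 q 2 m * poch4 q 1 m * poch4 q 4 m * (1 + (invSum4 q 4 m - m) * w)) * h32
    - (poch4 q 3 m * poch4 q 2 m * poch4 q 4 m * (1 + (invSum4 q 2 m - m) * w)) * h14
    + (-1) ^ m * poch4 q 1 m * poch4 q 2 m * poch4 q 3 m * poch4 q 4 m * (s14 - s32)
    + (-1) ^ m * poch4 q 1 m * poch4 q 2 m * poch4 q 3 m * poch4 q 4 m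
      * ((invSum4 q 2 m - m) * invSum4 q 1 m - (invSum4 q 4 m - m) * invSum4 q 3 m) * hw

theorem poch4_div_sub_div_eq {K : Type*} [Field K] {x : K} (hx : ∀ k, 0 < k → 1 - x ^ k ≠ 0)
    (m : ℕ) :
    poch4 x 2 m ^ 2 / poch4 x 4 m ^ 2 * x ^ (2 * m)
        - (1 - x ^ (4 * m + 1)) / (1 - x) * poch4 x 3 (2 * m) / poch4 x 5 (2 * m) =
      (poch4 x 2 m ^ 2 * x ^ (2 * m) * poch4 x 1 m * poch4 x (4 * m + 5) m
          - poch4 x 3 m * poch4 x (4 * m + 3) m * poch4 x 4 m ^ 2)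
        / (poch4 x 4 m ^ 2 * poch4 x 1 m * poch4 x (4 * m + 5) m) := by
  have hC : poch4 x 3 (2 * m) = poch4 x 3 m * poch4 x (4 * m + 3) m := by
    rw [two_mul, poch4_add]
  have hD : (1 - x) * poch4 x 5 (2 * m) =
      poch4 x 1 m * (1 - x ^ (4 * m + 1)) * poch4 x (4 * m + 5) m := by
    have h := poch4_succ' x 1 (2 * m)
    rw [pow_one] at h
    rw [← h, show 2 * m + 1 = (m + 1) + m by ring, poch4_add, poch4_succ,
      show 4 * (m + 1) + 1 = 4 * m + 5 by ring]
  have h1 : 1 - x ≠ 0 := by simpa using hx 1 one_pos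
  have := poch4_ne_zero hx (a := 1) one_pos m
  have := poch4_ne_zero hx (a := 4) (by norm_num) m
  have := poch4_ne_zero hx (a := 5) (by norm_num) (2 * m)
  have := poch4_ne_zero hx (a := 4 * m + 5) (by omega) m
  rw [hC, eq_div_iff (by positivity)]
  field_simp
  linear_combination (poch4 x 4 m ^ 2 * poch4 x 3 m * poch4 x (4 * m + 3) m) * hD

theorem cyclotomic_not_dvd_one_sub_X_pow {N k : ℕ} (hN : 0 < N) (hk : ¬ N ∣ k) :
    ¬ cyclotomic N ℚ ∣ 1 - X ^ k := by
  intro h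
  have hζ := Complex.isPrimitiveRoot_exp N hN.ne'
  have hℂ : cyclotomic N ℂ ∣ 1 - X ^ k := by
    simpa [Polynomial.map_cyclotomic] using Polynomial.map_dvd (algebraMap ℚ ℂ) h
  have hroot := (hζ.isRoot_cyclotomic hN).dvd hℂ
  simp only [IsRoot, eval_sub, eval_one, eval_pow, eval_X, sub_eq_zero] at hroot
  exact hk ((hζ.pow_eq_one_iff_dvd k).1 hroot.symm)

theorem cyclotomic_not_dvd_poch4 {N a k : ℕ} (hN : 0 < N) (h : ∀ i < k, ¬ N ∣ 4 * i + a) :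
    ¬ cyclotomic N ℚ ∣ poch4 X a k :=
  (cyclotomic.irreducible_rat hN).prime.not_dvd_finsetProd fun i hi =>
    cyclotomic_not_dvd_one_sub_X_pow hN (h i (mem_range.1 hi))

theorem cyclotomic_sq_dvd_poch4_identity (m : ℕ) :
    cyclotomic (4 * m + 1) ℚ ^ 2 ∣
      poch4 X 2 m ^ 2 * X ^ (2 * m) * poch4 X 1 m * poch4 X (4 * m + 5) m
        - poch4 X 3 m * poch4 X (4 * m + 3) m * poch4 X 4 m ^ 2 := by
  set I := Ideal.span {cyclotomic (4 * m + 1) ℚ}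
  have hI : I.IsMaximal := PrincipalIdealRing.isMaximal_of_irreducible
    (cyclotomic.irreducible_rat (by omega))
  rw [← Ideal.mem_span_singleton, ← Ideal.span_singleton_pow,
    ← Ideal.Quotient.eq_zero_iff_mem, map_sub, sub_eq_zero]
  simp only [map_mul, map_pow, map_poch4]
  refine poch4_identity_of_sq_eq_zero ?_ fun k hk hkN => ?_
  · rw [← map_pow, ← map_one (Ideal.Quotient.mk _), ← map_sub, ← map_pow,
      Ideal.Quotient.eq_zero_iff_mem]
    refine Ideal.pow_mem_pow (Ideal.mem_span_singleton.2 ?_) 2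
    simpa using (cyclotomic.dvd_X_pow_sub_one (4 * m + 1) ℚ).neg_right
  · rw [← map_pow, ← map_one (Ideal.Quotient.mk _), ← map_sub]
    refine Ideal.Quotient.isUnit_mk_pow_of_notMem I fun hmem => ?_
    exact cyclotomic_not_dvd_one_sub_X_pow (by omega) (fun hd => by
      have := Nat.le_of_dvd hk hd; omega) (Ideal.mem_span_singleton.1 hmem)

theorem RatFunc.one_sub_X_pow_ne_zero {K : Type*} [Field K] {k : ℕ} (hk : 0 < k) :
    1 - (RatFunc.X : RatFunc K) ^ k ≠ 0 := by
  rw [← RatFunc.algebraMap_X, ← map_pow, ← map_one (algebraMap K[X] (RatFunc K)), ← map_sub]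
  refine RatFunc.algebraMap_ne_zero fun h => ?_
  simpa [hk.ne'] using congrArg (Polynomial.eval 0) h

theorem RatFunc.pow_dvd_num_div_of_not_dvd {K : Type*} [Field K] {p g d : K[X]} (hp : Prime p)
    {k : ℕ} (hg : p ^ k ∣ g) (hd : ¬ p ∣ d) :
    p ^ k ∣ (algebraMap K[X] (RatFunc K) g / algebraMap K[X] (RatFunc K) d).num := by
  have hd0 : d ≠ 0 := by rintro rfl; exact hd (dvd_zero p)
  refine hp.pow_dvd_of_dvd_mul_right k hd ?_
  rw [(RatFunc.num_mul_eq_mul_denom_iff hd0).2 rfl]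
  exact hg.mul_right _

theorem poch_X_pow (a k : ℕ) : poch (RatFunc.X ^ a) (RatFunc.X ^ 4) k = poch4 RatFunc.X a k :=
  prod_congr rfl fun i _ => by ring

theorem stmt9_general (n : ℕ) (hn4 : n % 4 = 1) :
    (Polynomial.cyclotomic n ℚ) ^ 2 ∣
      ((poch (RatFunc.X ^ 2) (RatFunc.X ^ 4) ((n - 1) / 4)) ^ 2
          / (poch (RatFunc.X ^ 4) (RatFunc.X ^ 4) ((n - 1) / 4)) ^ 2
          * RatFunc.X ^ ((n - 1) / 2)
        - qint n * poch (RatFunc.X ^ 3) (RatFunc.X ^ 4) ((n - 1) / 2)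
          / poch (RatFunc.X ^ 5) (RatFunc.X ^ 4) ((n - 1) / 2)).num := by
  obtain ⟨m, rfl⟩ : ∃ m, n = 4 * m + 1 := ⟨n / 4, by omega⟩
  have hp : Prime (cyclotomic (4 * m + 1) ℚ) := (cyclotomic.irreducible_rat (by omega)).prime
  have hden : ¬ cyclotomic (4 * m + 1) ℚ ∣
      poch4 X 4 m ^ 2 * poch4 X 1 m * poch4 X (4 * m + 5) m := by
    refine hp.not_dvd_mul (hp.not_dvd_mul (fun h => ?_) ?_) ?_
    · exact cyclotomic_not_dvd_poch4 (by omega)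
        (fun i hi hd => by have := Nat.le_of_dvd (by omega) hd; omega) (hp.dvd_of_dvd_pow h)
    · exact cyclotomic_not_dvd_poch4 (by omega)
        (fun i hi hd => by have := Nat.le_of_dvd (by omega) hd; omega)
    · -- the exponents `4i + 4m + 5` lie strictly between `4m + 1` and `2(4m + 1)`
      exact cyclotomic_not_dvd_poch4 (by omega) fun i hi ⟨c, hc⟩ => by
        rcases c with _ | _ | c <;> nlinarith
  rw [show (4 * m + 1 - 1) / 4 = m by omega, show (4 * m + 1 - 1) / 2 = 2 * m by omega,
    poch_X_pow, poch_X_pow, poch_X_pow, poch_X_pow, qint,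
    poch4_div_sub_div_eq (fun k hk => RatFunc.one_sub_X_pow_ne_zero hk), ← RatFunc.algebraMap_X]
  simp only [← map_poch4, ← map_pow, ← map_mul, ← map_sub]
  exact RatFunc.pow_dvd_num_div_of_not_dvd hp (cyclotomic_sq_dvd_poch4_identity m) hden

/-- for `n ≡ 1 (mod 4)` positive,
`(q²;q⁴)²_{(n-1)/4}/(q⁴;q⁴)²_{(n-1)/4} · q^{(n-1)/2}
 ≡ [n]·(q³;q⁴)_{(n-1)/2}/(q⁵;q⁴)_{(n-1)/2} (mod Φ_n(q)²)`. -/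
theorem stmt9 (n : ℕ) (hn : 0 < n) (hn4 : n % 4 = 1) :
    (Polynomial.cyclotomic n ℚ) ^ 2 ∣
      ((poch (RatFunc.X ^ 2) (RatFunc.X ^ 4) ((n - 1) / 4)) ^ 2
          / (poch (RatFunc.X ^ 4) (RatFunc.X ^ 4) ((n - 1) / 4)) ^ 2
          * RatFunc.X ^ ((n - 1) / 2)
        - qint n * poch (RatFunc.X ^ 3) (RatFunc.X ^ 4) ((n - 1) / 2)
          / poch (RatFunc.X ^ 5) (RatFunc.X ^ 4) ((n - 1) / 2)).num :=
  stmt9_general n hn4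
end

section
/- For any odd integer n > 1, ∑_{k=0}^{(n-1)/2} (q;q^2)_k^2 / (q^2;q^2)_k^2 ≡ (-1)^{(n-1)/2} q^{(1-n^2)/4} modulo Φ_n(q)^2, as a congruence of rational functions in q (the right side involving q^{(1-n^2)/4}, a negative power of q, interpreted in the Laurent polynomial ring). -/
open Finset Polynomial

/-! With `n = 2m + 1`, the sum is compared termwise with the terminating q-Chu–Vandermonde sum
`∑_{k ≤ m} (q^{n+1};q²)_k (q^{1-n};q²)_k / (q²;q²)_k² = (-1)^m q^{-m(m+1)}`, which is proved by
the Wilf–Zeilberger method. Since `(1 - q^{n+1+2i})(q^n - q^{1+2i}) ≡ q^n (1 - q^{1+2i})²`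
modulo `(q^n - 1)²`, the `k`-th terms differ by `Φ_n(q)²` times a fraction with denominator
`q^{nk} (q²;q²)_k²`, which is prime to `Φ_n` for `k ≤ m`. Such fractions form a group, and for
an element of it `Φ_n²` divides the numerator of the reduced fraction. -/

section LocalMultiple

variable {K : Type*} [Field K]

/-- `f ∈ d • K[X]_(p)`, the localization being at the prime `p`. -/
def IsLocalMultiple (p d : K[X]) (f : RatFunc K) : Prop :=
  ∃ a b : K[X], ¬ p ∣ b ∧ f * algebraMap K[X] (RatFunc K) b = algebraMap K[X] (RatFunc K) (d * a)

variable {p d : K[X]}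

lemma IsLocalMultiple.zero (hp : ¬ IsUnit p) : IsLocalMultiple p d 0 :=
  ⟨0, 1, fun h => hp (isUnit_of_dvd_one h), by simp⟩

lemma IsLocalMultiple.add (hp : Prime p) {f g : RatFunc K} (hf : IsLocalMultiple p d f)
    (hg : IsLocalMultiple p d g) : IsLocalMultiple p d (f + g) := by
  obtain ⟨a₁, b₁, hb₁, e₁⟩ := hf
  obtain ⟨a₂, b₂, hb₂, e₂⟩ := hg
  refine ⟨a₁ * b₂ + a₂ * b₁, b₁ * b₂, fun h => (hp.dvd_mul.mp h).elim hb₁ hb₂, ?_⟩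
  simp only [map_mul, map_add] at e₁ e₂ ⊢
  linear_combination algebraMap K[X] (RatFunc K) b₂ * e₁ + algebraMap K[X] (RatFunc K) b₁ * e₂

lemma IsLocalMultiple.sum (hp : Prime p) {ι : Type*} {s : Finset ι} {f : ι → RatFunc K}
    (h : ∀ i ∈ s, IsLocalMultiple p d (f i)) : IsLocalMultiple p d (∑ i ∈ s, f i) :=
  sum_induction f _ (fun _ _ => IsLocalMultiple.add hp) (IsLocalMultiple.zero hp.not_isUnit) h

lemma IsLocalMultiple.pow_dvd_num (hp : Irreducible p) {e : ℕ} {f : RatFunc K}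
    (hf : IsLocalMultiple p (p ^ e) f) : p ^ e ∣ f.num := by
  obtain ⟨a, b, hb, hfab⟩ := hf
  have hcop : IsCoprime (p ^ e) b := (hp.coprime_iff_not_dvd.mpr hb).pow_left
  refine hcop.dvd_of_dvd_mul_right ⟨a * f.denom, RatFunc.algebraMap_injective K ?_⟩
  have hnum := (div_eq_iff (RatFunc.algebraMap_ne_zero f.denom_ne_zero)).mp f.num_div_denom
  simp only [map_mul] at hfab ⊢
  rw [hnum]
  linear_combination algebraMap K[X] (RatFunc K) f.denom * hfab

end LocalMultiple

lemma dvd_prod_sub_prod {R ι : Type*} [CommRing R] {d : R} {s : Finset ι} {f g : ι → R}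
    (h : ∀ i ∈ s, d ∣ f i - g i) : d ∣ ∏ i ∈ s, f i - ∏ i ∈ s, g i := by
  simp_rw [← Ideal.mem_span_singleton, ← Ideal.Quotient.eq] at h ⊢
  simp only [map_prod]
  exact prod_congr rfl h

lemma sub_one_sq_dvd_prod_sub_prod {R ι : Type*} [CommRing R] (x : R) (y : ι → R) (s : Finset ι) :
    (x - 1) ^ 2 ∣ ∏ i ∈ s, x * (1 - y i) ^ 2 - ∏ i ∈ s, (1 - x * y i) * (x - y i) :=
  dvd_prod_sub_prod fun i _ => ⟨y i, by ring⟩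

section Poch

variable (a Q : RatFunc ℚ) (k : ℕ)

lemma poch_zero : poch a Q 0 = 1 := prod_range_zero _

lemma poch_succ : poch a Q (k + 1) = poch a Q k * (1 - a * Q ^ k) := prod_range_succ _ _

lemma poch_succ' : poch a Q (k + 1) = (1 - a) * poch (a * Q) Q k := by
  simp only [poch, prod_range_succ', pow_succ, pow_zero, mul_one, mul_assoc, mul_comm]

variable {a Q k}

lemma poch_eq_zero {j : ℕ} (hj : j < k) (h : a * Q ^ j = 1) : poch a Q k = 0 :=
  prod_eq_zero (mem_range.2 hj) (by rw [h, sub_self])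

lemma poch_ne_zero (h : ∀ i < k, a * Q ^ i ≠ 1) : poch a Q k ≠ 0 :=
  prod_ne_zero_iff.2 fun i hi => sub_ne_zero.2 (h i (mem_range.1 hi)).symm

end Poch

section ChuVandermonde

variable {Q : RatFunc ℚ}

noncomputable def chuVandermondeTerm (Q : RatFunc ℚ) (m k : ℕ) : RatFunc ℚ :=
  poch (Q ^ (m + 1)) Q k * poch (Q ^ m)⁻¹ Q k / poch Q Q k ^ 2

/-- Wilf–Zeilberger certificate for the recurrence in `m` of `∑ₖ chuVandermondeTerm Q m k`. -/
noncomputable def chuVandermondeCert (Q : RatFunc ℚ) (m k : ℕ) : RatFunc ℚ :=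
  (1 + Q ^ (m + 1)) / (Q ^ (m + 1) * (1 - Q ^ (m + 1))) * (1 - Q ^ (m + 1) * Q ^ k)
    * chuVandermondeTerm Q m k

lemma chuVandermondeTerm_zero (m : ℕ) : chuVandermondeTerm Q m 0 = 1 := by
  simp [chuVandermondeTerm, poch_zero]

lemma chuVandermondeTerm_eq_zero (hQ0 : Q ≠ 0) {m k : ℕ} (h : m < k) :
    chuVandermondeTerm Q m k = 0 := by
  rw [chuVandermondeTerm, poch_eq_zero h (inv_mul_cancel₀ (pow_ne_zero m hQ0)), mul_zero,
    zero_div]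

lemma chuVandermondeTerm_succ (m k : ℕ) :
    chuVandermondeTerm Q m (k + 1) = chuVandermondeTerm Q m k
      * ((1 - Q ^ (m + 1) * Q ^ k) * (1 - (Q ^ m)⁻¹ * Q ^ k) / (1 - Q ^ (k + 1)) ^ 2) := by
  simp only [chuVandermondeTerm, poch_succ, mul_pow]
  rw [mul_mul_mul_comm, mul_div_mul_comm, ← pow_succ']

lemma chuVandermondeTerm_succ_succ (hQ0 : Q ≠ 0) {m : ℕ} (hQm : 1 - Q ^ (m + 1) ≠ 0) (k : ℕ) :
    chuVandermondeTerm Q (m + 1) (k + 1) = chuVandermondeTerm Q m k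
      * ((1 - Q ^ (m + 1) * Q ^ k) * (1 - Q ^ (m + 1) * Q ^ (k + 1)) * (1 - (Q ^ (m + 1))⁻¹)
        / ((1 - Q ^ (m + 1)) * (1 - Q ^ (k + 1)) ^ 2)) := by
  have hA : poch (Q ^ (m + 1 + 1)) Q (k + 1) = poch (Q ^ (m + 1)) Q (k + 2) / (1 - Q ^ (m + 1)) := by
    rw [poch_succ' _ _ (k + 1), pow_succ _ (m + 1)]
    field_simp
  have hB : poch (Q ^ (m + 1))⁻¹ Q (k + 1) = (1 - (Q ^ (m + 1))⁻¹) * poch (Q ^ m)⁻¹ Q k := by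
    rw [poch_succ', pow_succ, mul_inv, inv_mul_cancel_right₀ hQ0]
  rw [chuVandermondeTerm, hA, hB, poch_succ _ _ (k + 1), poch_succ, poch_succ, chuVandermondeTerm]
  rw [← pow_succ']
  generalize 1 - Q ^ (m + 1) = A
  generalize 1 - Q ^ (k + 1) = z
  ring

lemma sum_range_chuVandermondeTerm_recurrence (hQ0 : Q ≠ 0) (hQ : ∀ j, 0 < j → Q ^ j ≠ 1)
    (m N : ℕ) :
    ∑ k ∈ range (N + 1), (chuVandermondeTerm Q (m + 1) k + (Q ^ (m + 1))⁻¹ * chuVandermondeTerm Q m k)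
      = chuVandermondeCert Q m N := by
  have hA : Q ^ (m + 1) ≠ 0 := pow_ne_zero _ hQ0
  have hA1 : 1 - Q ^ (m + 1) ≠ 0 := sub_ne_zero.2 (hQ _ m.succ_pos).symm
  induction N with
  | zero =>
    rw [sum_range_one, chuVandermondeTerm_zero, chuVandermondeTerm_zero, chuVandermondeCert,
      chuVandermondeTerm_zero, pow_zero]
    field_simp
    ring
  | succ N ih =>
    have hw : 1 - Q ^ (N + 1) ≠ 0 := sub_ne_zero.2 (hQ _ N.succ_pos).symm
    have hwA : (Q ^ m)⁻¹ * Q ^ N = Q ^ (N + 1) * (Q ^ (m + 1))⁻¹ := by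
      rw [pow_succ' Q m, pow_succ' Q N]; field_simp
    rw [sum_range_succ, ih, chuVandermondeTerm_succ_succ hQ0 hA1, chuVandermondeTerm_succ,
      chuVandermondeCert, chuVandermondeCert, chuVandermondeTerm_succ, hwA]
    field_simp
    ring

theorem sum_chuVandermondeTerm (hQ0 : Q ≠ 0) (hQ : ∀ j, 0 < j → Q ^ j ≠ 1) (m : ℕ) :
    ∑ k ∈ range (m + 1), chuVandermondeTerm Q m k = (-1) ^ m * (Q ^ (m + 1).choose 2)⁻¹ := by
  induction m with
  | zero => simp [chuVandermondeTerm_zero]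
  | succ m ih =>
    have hrec := sum_range_chuVandermondeTerm_recurrence hQ0 hQ m (m + 1)
    rw [chuVandermondeCert, chuVandermondeTerm_eq_zero hQ0 m.lt_succ_self, mul_zero,
      sum_add_distrib, ← mul_sum, sum_range_succ (chuVandermondeTerm Q m),
      chuVandermondeTerm_eq_zero hQ0 m.lt_succ_self, add_zero, ih] at hrec
    rw [eq_neg_of_add_eq_zero_left hrec, Nat.choose_succ_succ' (m + 1), Nat.choose_one_right,
      pow_add, mul_inv, pow_succ]
    ring

end ChuVandermonde

lemma RatFunc.X_pow_ne_one {K : Type*} [Field K] {j : ℕ} (hj : 0 < j) :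
    (RatFunc.X : RatFunc K) ^ j ≠ 1 := by
  rw [← RatFunc.algebraMap_X, ← map_pow, ← map_one (algebraMap K[X] (RatFunc K)),
    (RatFunc.algebraMap_injective K).ne_iff]
  intro h
  simpa [hj.ne'] using congrArg natDegree h

lemma sum_chuVandermondeTerm_X_sq (m : ℕ) :
    ∑ k ∈ range (m + 1), chuVandermondeTerm (RatFunc.X ^ 2) m k
      = (-1) ^ m * (RatFunc.X ^ (m * (m + 1)))⁻¹ := by
  have hchoose : 2 * (m + 1).choose 2 = m * (m + 1) := by
    rw [Nat.choose_two_right, Nat.add_sub_cancel, mul_comm m]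
    exact Nat.mul_div_cancel' (Nat.even_mul_pred_self (m + 1) |>.two_dvd)
  rw [sum_chuVandermondeTerm (pow_ne_zero 2 RatFunc.X_ne_zero)
    (fun j hj => by rw [← pow_mul]; exact RatFunc.X_pow_ne_one (by omega)), ← pow_mul, hchoose]

lemma not_cyclotomic_dvd_of_aeval_ne_zero {n : ℕ} (hn : 0 < n) {ζ : ℂ} (hζ : IsPrimitiveRoot ζ n)
    {b : ℚ[X]} (hb : aeval ζ b ≠ 0) : ¬ cyclotomic n ℚ ∣ b := fun h =>
  hb (aeval_eq_zero_of_dvd_aeval_eq_zero h (by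
    rw [aeval_def, eval₂_eq_eval_map, map_cyclotomic]; exact hζ.isRoot_cyclotomic hn))

lemma not_cyclotomic_dvd_X_pow_mul_prod {n k : ℕ} (hk : 2 * k < n) (j e : ℕ) :
    ¬ cyclotomic n ℚ ∣ X ^ j * (∏ i ∈ range k, (1 - X ^ 2 * (X ^ 2) ^ i)) ^ e := by
  obtain ⟨ζ, hζ⟩ : ∃ ζ : ℂ, IsPrimitiveRoot ζ n := ⟨_, Complex.isPrimitiveRoot_exp n (by omega)⟩
  refine not_cyclotomic_dvd_of_aeval_ne_zero (by omega) hζ ?_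
  simp only [map_mul, map_pow, map_prod, map_sub, map_one, aeval_X, ← pow_mul, ← pow_add]
  refine mul_ne_zero (pow_ne_zero _ (hζ.ne_zero (by omega)))
    (pow_ne_zero _ (prod_ne_zero_iff.2 fun i hi => sub_ne_zero.2 ?_))
  exact (hζ.pow_ne_one_of_pos_of_lt (by omega) (by simp at hi; omega)).symm

lemma isLocalMultiple_sub_chuVandermondeTerm {m k : ℕ} (hk : k ≤ m) :
    IsLocalMultiple (cyclotomic (2 * m + 1) ℚ) (cyclotomic (2 * m + 1) ℚ ^ 2)
      (poch RatFunc.X (RatFunc.X ^ 2) k ^ 2 / poch (RatFunc.X ^ 2) (RatFunc.X ^ 2) k ^ 2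
        - chuVandermondeTerm (RatFunc.X ^ 2) m k) := by
  set n := 2 * m + 1
  set q : RatFunc ℚ := RatFunc.X
  let y : ℕ → ℚ[X] := fun i => X * (X ^ 2) ^ i
  let b : ℚ[X] := X ^ (n * k) * (∏ i ∈ range k, (1 - X ^ 2 * (X ^ 2) ^ i)) ^ 2
  obtain ⟨c, hc⟩ := (pow_dvd_pow_of_dvd (cyclotomic.dvd_X_pow_sub_one n ℚ) 2).trans
    (sub_one_sq_dvd_prod_sub_prod (X ^ n) y (range k))
  refine ⟨c, b, not_cyclotomic_dvd_X_pow_mul_prod (by omega) _ _, ?_⟩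
  have hq : q ≠ 0 := RatFunc.X_ne_zero
  have hfactor : ∀ i, algebraMap ℚ[X] (RatFunc ℚ) ((1 - X ^ n * y i) * (X ^ n - y i))
      = q ^ n * ((1 - (q ^ 2) ^ (m + 1) * (q ^ 2) ^ i) * (1 - ((q ^ 2) ^ m)⁻¹ * (q ^ 2) ^ i)) := by
    intro i
    simp only [y, n, map_mul, map_sub, map_pow, map_one, RatFunc.algebraMap_X]
    field_simp
    ring
  have hp2 : poch (q ^ 2) (q ^ 2) k ≠ 0 := poch_ne_zero fun i _ => by
    rw [← pow_succ', ← pow_mul]; exact RatFunc.X_pow_ne_one (by omega)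
  rw [← hc, map_sub, map_prod, map_prod, prod_congr rfl fun i _ => hfactor i]
  simp only [b, y, map_mul, map_pow, map_prod, map_sub, map_one, RatFunc.algebraMap_X,
    prod_mul_distrib, prod_pow, prod_const, card_range, chuVandermondeTerm]
  simp only [poch] at hp2 ⊢
  field_simp
  ring

theorem stmt15_general (n : ℕ) (hodd : Odd n) :
    (Polynomial.cyclotomic n ℚ) ^ 2 ∣
      ((∑ k ∈ Finset.range ((n - 1) / 2 + 1),
          (poch RatFunc.X (RatFunc.X ^ 2) k) ^ 2
            / (poch (RatFunc.X ^ 2) (RatFunc.X ^ 2) k) ^ 2)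
        - (-1) ^ ((n - 1) / 2) * RatFunc.X ^ (-(((n ^ 2 - 1) / 4 : ℕ) : ℤ))).num := by
  obtain ⟨m, rfl⟩ := hodd
  have hhalf : (2 * m + 1 - 1) / 2 = m := by omega
  have hquarter : ((2 * m + 1) ^ 2 - 1) / 4 = m * (m + 1) := by
    rw [show (2 * m + 1) ^ 2 = 4 * (m * (m + 1)) + 1 by ring, Nat.add_sub_cancel,
      Nat.mul_div_cancel_left _ four_pos]
  have hΦ := cyclotomic.irreducible_rat (n := 2 * m + 1) (by omega)
  rw [hhalf, hquarter, zpow_neg, zpow_natCast, ← sum_chuVandermondeTerm_X_sq, ← sum_sub_distrib]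
  exact (IsLocalMultiple.sum hΦ.prime fun k hk =>
    isLocalMultiple_sub_chuVandermondeTerm (Nat.lt_succ_iff.mp (mem_range.mp hk))).pow_dvd_num hΦ

/-- for odd `n > 1`,
`∑_{k=0}^{(n-1)/2} (q;q²)²_k/(q²;q²)²_k ≡ (-1)^{(n-1)/2} q^{(1-n²)/4} (mod Φ_n(q)²)`. -/
theorem stmt15 (n : ℕ) (hn : 1 < n) (hodd : Odd n) :
    (Polynomial.cyclotomic n ℚ) ^ 2 ∣
      ((∑ k ∈ Finset.range ((n - 1) / 2 + 1),
          (poch RatFunc.X (RatFunc.X ^ 2) k) ^ 2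
            / (poch (RatFunc.X ^ 2) (RatFunc.X ^ 2) k) ^ 2)
        - (-1) ^ ((n - 1) / 2) * RatFunc.X ^ (-(((n ^ 2 - 1) / 4 : ℕ) : ℤ))).num :=
  stmt15_general n hodd
end

section
/- Let n be a positive odd integer and k a nonnegative integer with k ≤ (n-1)/2. Then (1/2)_k^3 / k!^3 ≡ (q^n;q^{2n})_k^2 (q^{2n};q^{4n})_k / ((q^{2n};q^{2n})_k^2 (q^{4n};q^{4n})_k) · q^{2nk} modulo Φ_n(q)^2, as a congruence of rational functions in q (the left side being a rational constant with denominator a power of 2). -/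
open Finset Polynomial

/-- The rational rising factorial `(a)_k`. -/
def ascRat (a : ℚ) (k : ℕ) : ℚ := ∏ i ∈ Finset.range k, (a + i)

/-!
Put `t = qⁿ`. Every factor `1 - tᵐ` of the q-shifted factorials is `(1 - t)[m]_t`, so the powers
of `1 - t` cancel and the right side becomes `t²ᵏ A(t)/B(t)` for products `A`, `B` of t-integers,
while the left side is `A(1)/B(1)`. The numerator `A(1) B(t) - B(1) t²ᵏ A(t)` of the difference
vanishes to second order at `t = 1`: this property is multiplicative in `(A, B)`, and for a single
factor it is an identity between logarithmic derivatives at `1`. Finally `Φₙ ∣ qⁿ - 1`, and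
`B(qⁿ) ≡ B(1) ≠ 0` modulo `qⁿ - 1`, so reducing the fraction cannot remove a factor `Φₙ`.
-/

section CrossDiff

variable {R : Type*} [CommRing R]

lemma X_sub_one_sq_dvd_of_eval_eq_zero {F : R[X]} (h₀ : F.eval 1 = 0)
    (h₁ : (derivative F).eval 1 = 0) : (X - 1) ^ 2 ∣ F := by
  obtain ⟨G, rfl⟩ := dvd_iff_isRoot.mpr h₀
  have hG : X - C 1 ∣ G := dvd_iff_isRoot.mpr (by simpa using h₁)
  rw [sq, ← C_1]
  exact mul_dvd_mul_left _ hG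

/-- The numerator of `P(1)/Q(1) - Xʲ P/Q` over the denominator `Q(1) Q`. -/
noncomputable def crossDiff (P Q : R[X]) (j : ℕ) : R[X] :=
  C (P.eval 1) * Q - C (Q.eval 1) * X ^ j * P

lemma crossDiff_mul (P Q p q : R[X]) (j l : ℕ) :
    crossDiff (P * p) (Q * q) (j + l) =
      C (p.eval 1) * q * crossDiff P Q j + C (Q.eval 1) * X ^ j * P * crossDiff p q l := by
  simp only [crossDiff, eval_mul, C_mul, pow_add]
  ring

lemma dvd_crossDiff_prod {ι : Type*} (d : R[X]) (s : Finset ι) (P Q : ι → R[X]) (j : ι → ℕ)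
    (h : ∀ i ∈ s, d ∣ crossDiff (P i) (Q i) (j i)) :
    d ∣ crossDiff (∏ i ∈ s, P i) (∏ i ∈ s, Q i) (∑ i ∈ s, j i) := by
  classical
  induction s using Finset.induction_on with
  | empty => simp [crossDiff]
  | insert a s ha ih =>
    rw [prod_insert ha, prod_insert ha, sum_insert ha, crossDiff_mul]
    exact dvd_add (dvd_mul_of_dvd_right (h a (mem_insert_self a s)) _)
      (dvd_mul_of_dvd_right (ih fun i hi => h i (mem_insert_of_mem hi)) _)

lemma X_sub_one_sq_dvd_crossDiff {P Q : R[X]} {j : ℕ}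
    (h : P.eval 1 * (derivative Q).eval 1 =
      Q.eval 1 * (j * P.eval 1 + (derivative P).eval 1)) :
    (X - 1) ^ 2 ∣ crossDiff P Q j := by
  apply X_sub_one_sq_dvd_of_eval_eq_zero
  · simp only [crossDiff, eval_sub, eval_mul, eval_C, eval_pow, eval_X, one_pow]
    ring
  · simp only [crossDiff, derivative_sub, derivative_mul, derivative_C, derivative_X_pow,
      eval_sub, eval_add, eval_mul, eval_C, eval_pow, eval_X, one_pow, eval_zero]
    linear_combination h

end CrossDiff

section Expand

variable {R : Type*} [CommRing R]

lemma X_pow_sub_one_dvd_expand_sub_C_eval_one (n : ℕ) (P : R[X]) :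
    X ^ n - 1 ∣ expand R n P - C (P.eval 1) := by
  simpa using map_dvd (expand R n) (X_sub_C_dvd_sub_C_eval (p := P) (a := 1))

lemma isCoprime_X_pow_sub_one_expand (n : ℕ) {P : R[X]} (hP : IsUnit (P.eval 1)) :
    IsCoprime (X ^ n - 1) (expand R n P) := by
  obtain ⟨g, hg⟩ := X_pow_sub_one_dvd_expand_sub_C_eval_one n P
  rw [sub_eq_iff_eq_add'.mp hg]
  have hC : IsCoprime (X ^ n - 1) (C (P.eval 1)) :=
    isCoprime_one_right.of_isCoprime_of_dvd_right (isUnit_C.mpr hP).dvd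
  exact hC.add_mul_left_right g

end Expand

lemma RatFunc.dvd_num_of_eq_div {K : Type*} [Field K] {x : RatFunc K} {p q c : K[X]}
    (hq : q ≠ 0) (hx : x = algebraMap _ _ p / algebraMap _ _ q) (hc : IsCoprime c q)
    (hp : c ∣ p) : c ∣ x.num := by
  have h := (RatFunc.num_mul_eq_mul_denom_iff hq).mpr hx
  exact hc.dvd_of_dvd_mul_right (h ▸ dvd_mul_of_dvd_left hp _)

noncomputable def qInt (m : ℕ) : ℚ[X] := ∑ i ∈ range m, X ^ i

lemma qInt_eval_one (m : ℕ) : (qInt m).eval 1 = m := by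
  simp [qInt]

lemma qInt_derivative_eval_one (m : ℕ) : (derivative (qInt m)).eval 1 = m * (m - 1) / 2 := by
  induction m with
  | zero => simp [qInt]
  | succ m ih =>
    simp only [qInt, sum_range_succ, derivative_add, eval_add] at ih ⊢
    rw [ih, derivative_X_pow]
    simp only [map_natCast, eval_mul, eval_natCast, eval_pow, eval_X, one_pow, mul_one,
      Nat.cast_add, Nat.cast_one, add_sub_cancel_right]
    ring

lemma one_sub_X_pow (m : ℕ) : 1 - X ^ m = (1 - X) * qInt m :=
  (mul_neg_geom_sum X m).symm

noncomputable def qOddProd (k : ℕ) : ℚ[X] :=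
  ∏ i ∈ range k, qInt (1 + 2 * i) ^ 2 * qInt (2 + 4 * i)

noncomputable def qEvenProd (k : ℕ) : ℚ[X] :=
  ∏ i ∈ range k, qInt (2 + 2 * i) ^ 2 * qInt (4 + 4 * i)

lemma X_sub_one_sq_dvd_crossDiff_qOddProd_qEvenProd (k : ℕ) :
    (X - 1) ^ 2 ∣ crossDiff (qOddProd k) (qEvenProd k) (2 * k) := by
  have h := dvd_crossDiff_prod ((X - 1) ^ 2) (range k)
    (fun i => qInt (1 + 2 * i) ^ 2 * qInt (2 + 4 * i))
    (fun i => qInt (2 + 2 * i) ^ 2 * qInt (4 + 4 * i)) (fun _ => 2) fun i _ => by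
      apply X_sub_one_sq_dvd_crossDiff
      simp only [derivative_mul, derivative_pow, eval_add, eval_mul, eval_pow, eval_C,
        qInt_eval_one, qInt_derivative_eval_one]
      push_cast
      ring
  rwa [sum_const, card_range, smul_eq_mul, mul_comm] at h

lemma qEvenProd_eval_one_ne_zero (k : ℕ) : (qEvenProd k).eval 1 ≠ 0 := by
  simp only [qEvenProd, eval_prod, eval_mul, eval_pow, qInt_eval_one]
  exact prod_ne_zero_iff.mpr fun i _ => by positivity

lemma qOddProd_eval_one_div_qEvenProd_eval_one (k : ℕ) :
    (qOddProd k).eval 1 / (qEvenProd k).eval 1 =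
      ascRat (1 / 2) k ^ 3 / (k.factorial : ℚ) ^ 3 := by
  rw [← prod_range_add_one_eq_factorial, ascRat, Nat.cast_prod, ← prod_pow, ← prod_pow,
    ← prod_div_distrib, qOddProd, qEvenProd, eval_prod, eval_prod, ← prod_div_distrib]
  refine prod_congr rfl fun i _ => ?_
  simp only [eval_mul, eval_pow, qInt_eval_one]
  push_cast
  field_simp
  ring

lemma poch_X_pow_mul (n a b k : ℕ) :
    poch (RatFunc.X ^ (a * n)) (RatFunc.X ^ (b * n)) k =
      algebraMap ℚ[X] (RatFunc ℚ) (expand ℚ n ((1 - X) ^ k * ∏ i ∈ range k, qInt (a + b * i))) := by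
  have h : (1 - X) ^ k * ∏ i ∈ range k, qInt (a + b * i) =
      ∏ i ∈ range k, (1 - X ^ (a + b * i)) := by
    simp_rw [one_sub_X_pow, prod_mul_distrib, prod_const, card_range]
  rw [h, map_prod, map_prod, poch]
  refine prod_congr rfl fun i _ => ?_
  simp only [← pow_mul, pow_add, map_sub, map_one, map_mul, map_pow, expand_X,
    RatFunc.algebraMap_X, sub_right_inj]
  ring_nf

lemma poch_odd_eq (n k : ℕ) :
    poch (RatFunc.X ^ n) (RatFunc.X ^ (2 * n)) k ^ 2
        * poch (RatFunc.X ^ (2 * n)) (RatFunc.X ^ (4 * n)) k =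
      algebraMap ℚ[X] (RatFunc ℚ) (expand ℚ n ((1 - X) ^ (3 * k) * qOddProd k)) := by
  have h := poch_X_pow_mul n 1 2 k
  rw [one_mul] at h
  rw [h, poch_X_pow_mul, ← map_pow, ← map_mul, ← map_pow, ← map_mul, qOddProd, prod_mul_distrib,
    prod_pow]
  ring_nf

lemma poch_even_eq (n k : ℕ) :
    poch (RatFunc.X ^ (2 * n)) (RatFunc.X ^ (2 * n)) k ^ 2
        * poch (RatFunc.X ^ (4 * n)) (RatFunc.X ^ (4 * n)) k =
      algebraMap ℚ[X] (RatFunc ℚ) (expand ℚ n ((1 - X) ^ (3 * k) * qEvenProd k)) := by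
  rw [poch_X_pow_mul, poch_X_pow_mul, ← map_pow, ← map_mul, ← map_pow, ← map_mul, qEvenProd,
    prod_mul_distrib, prod_pow]
  ring_nf

lemma sub_poch_ratio_eq_expand_crossDiff_div (n k : ℕ) (hn : 0 < n) :
    RatFunc.C (ascRat (1 / 2) k ^ 3 / (k.factorial : ℚ) ^ 3)
        - poch (RatFunc.X ^ n) (RatFunc.X ^ (2 * n)) k ^ 2
            * poch (RatFunc.X ^ (2 * n)) (RatFunc.X ^ (4 * n)) k
            / (poch (RatFunc.X ^ (2 * n)) (RatFunc.X ^ (2 * n)) k ^ 2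
              * poch (RatFunc.X ^ (4 * n)) (RatFunc.X ^ (4 * n)) k)
            * RatFunc.X ^ (2 * n * k) =
      algebraMap ℚ[X] (RatFunc ℚ) (expand ℚ n (crossDiff (qOddProd k) (qEvenProd k) (2 * k))) /
        algebraMap ℚ[X] (RatFunc ℚ) (expand ℚ n (C ((qEvenProd k).eval 1) * qEvenProd k)) := by
  set ψ : ℚ[X] →+* RatFunc ℚ := (algebraMap ℚ[X] (RatFunc ℚ)).comp (expand ℚ n : ℚ[X] →+* ℚ[X])
  have hψ : Function.Injective ψ := (RatFunc.algebraMap_injective ℚ).comp (expand_injective hn)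
  have hψC (r : ℚ) : ψ (C r) = RatFunc.C r := by simp [ψ, RatFunc.algebraMap_C]
  have hψX : ψ (X ^ (2 * k)) = RatFunc.X ^ (2 * n * k) := by
    simp [ψ, RatFunc.algebraMap_X, ← pow_mul, mul_comm, mul_left_comm]
  have hP : ψ ((1 - X) ^ (3 * k)) ≠ 0 := (map_ne_zero_iff ψ hψ).mpr
    (pow_ne_zero _ fun h => by simpa using congrArg (eval 0) h)
  have hB : ψ (qEvenProd k) ≠ 0 := (map_ne_zero_iff ψ hψ).mpr
    fun h => qEvenProd_eval_one_ne_zero k (by rw [h, eval_zero])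
  have hB₁ : RatFunc.C ((qEvenProd k).eval 1) ≠ 0 :=
    (map_ne_zero_iff _ (RatFunc.C_injective)).mpr (qEvenProd_eval_one_ne_zero k)
  change _ = ψ _ / ψ _
  rw [poch_odd_eq, poch_even_eq, ← qOddProd_eval_one_div_qEvenProd_eval_one, map_div₀]
  change _ - ψ _ / ψ _ * _ = _
  simp only [crossDiff, map_sub, map_mul, hψC, hψX]
  field_simp

theorem stmt19_general (n k : ℕ) (hn : 0 < n) :
    (Polynomial.cyclotomic n ℚ) ^ 2 ∣
      (RatFunc.C ((ascRat (1/2) k) ^ 3 / (k.factorial : ℚ) ^ 3)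
        - (poch (RatFunc.X ^ n) (RatFunc.X ^ (2 * n)) k) ^ 2
            * poch (RatFunc.X ^ (2 * n)) (RatFunc.X ^ (4 * n)) k
            / ((poch (RatFunc.X ^ (2 * n)) (RatFunc.X ^ (2 * n)) k) ^ 2
              * poch (RatFunc.X ^ (4 * n)) (RatFunc.X ^ (4 * n)) k)
            * RatFunc.X ^ (2 * n * k)).num := by
  have hB₁ := qEvenProd_eval_one_ne_zero k
  have hden : IsCoprime ((X ^ n - 1) ^ 2) (expand ℚ n (C ((qEvenProd k).eval 1) * qEvenProd k)) :=
    (isCoprime_X_pow_sub_one_expand n (by simpa using hB₁)).pow_left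
  have hnum : (X ^ n - 1) ^ 2 ∣ expand ℚ n (crossDiff (qOddProd k) (qEvenProd k) (2 * k)) := by
    simpa using map_dvd (expand ℚ n) (X_sub_one_sq_dvd_crossDiff_qOddProd_qEvenProd k)
  have hQ : C ((qEvenProd k).eval 1) * qEvenProd k ≠ 0 := fun h => by
    simpa [hB₁] using congrArg (eval 1) h
  refine (pow_dvd_pow_of_dvd (cyclotomic.dvd_X_pow_sub_one n ℚ) 2).trans ?_
  exact RatFunc.dvd_num_of_eq_div ((expand_ne_zero hn).mpr hQ)
    (sub_poch_ratio_eq_expand_crossDiff_div n k hn) hden hnum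

/-- for odd positive `n` and `0 ≤ k ≤ (n-1)/2`,
`(1/2)³_k/k!³ ≡ (qⁿ;q²ⁿ)²_k(q²ⁿ;q⁴ⁿ)_k/((q²ⁿ;q²ⁿ)²_k(q⁴ⁿ;q⁴ⁿ)_k)·q^{2nk}
 (mod Φ_n(q)²)`. -/
theorem stmt19 (n k : ℕ) (hn : 0 < n) (hodd : Odd n) (hk : k ≤ (n - 1) / 2) :
    (Polynomial.cyclotomic n ℚ) ^ 2 ∣
      (RatFunc.C ((ascRat (1/2) k) ^ 3 / (k.factorial : ℚ) ^ 3)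
        - (poch (RatFunc.X ^ n) (RatFunc.X ^ (2 * n)) k) ^ 2
            * poch (RatFunc.X ^ (2 * n)) (RatFunc.X ^ (4 * n)) k
            / ((poch (RatFunc.X ^ (2 * n)) (RatFunc.X ^ (2 * n)) k) ^ 2
              * poch (RatFunc.X ^ (4 * n)) (RatFunc.X ^ (4 * n)) k)
            * RatFunc.X ^ (2 * n * k)).num :=
  stmt19_general n k hn
end
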